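/- arXiv:1309.3767 — 9 statements merged into one kernel-verified Lean document; each statement's English description precedes it below -/
import Mathlib

section
/- Let f = h + conj(g) be harmonic on the unit disk with h, g analytic, satisfying |g⁽ⁿ⁾(0)| ≤ |h⁽ⁿ⁾(0)| for all n ≥ 1. If S_f(r₁) ≤ m < 1 for some 0 < r₁ < 1 and S_f(1) := sup_{0<r<1} S_f(r) ≤ 1, then S_f(r) ≤ m^(log r / log r₁) for all r₁ ≤ r < 1. -/
/-!
Writing `aₙ = h⁽ⁿ⁺¹⁾(0) / n!` and `bₙ = g⁽ⁿ⁺¹⁾(0) / n!` for the Taylor coefficients of `h'`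
and `g'`, the orthogonality of `zʲ z̄ᵏ` on discs about `0` gives
`S_f(r) = ∑ cₙ r^(2n+2)` with `cₙ = (|aₙ|² - |bₙ|²) / (n + 1) ≥ 0`.
Letting `r → 1` shows `∑ cₙ ≤ 1`. For `θ = log r / log r₁ ∈ (0, 1]` we have
`r^(2n+2) = (r₁^(2n+2))^θ`, so Hölder's inequality with weights `cₙ` gives
`S_f(r) ≤ (∑ cₙ)^(1-θ) S_f(r₁)^θ ≤ m^θ`.
-/

open Metric MeasureTheory Set Filter Topology
open scoped Nat

theorem Complex.polarCoord_symm_eq_mul_exp (p : ℝ × ℝ) :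
    Complex.polarCoord.symm p = p.1 * Complex.exp (p.2 * Complex.I) := by
  simp [Complex.exp_mul_I, ← Complex.ofReal_cos, ← Complex.ofReal_sin]

theorem setIntegral_ball_zero_eq_polar {E : Type*} [NormedAddCommGroup E] [NormedSpace ℝ E]
    (f : ℂ → E) (r : ℝ) :
    ∫ z in ball (0 : ℂ) r, f z =
      ∫ p in Ioo 0 r ×ˢ Ioo (-Real.pi) Real.pi, p.1 • f (Complex.polarCoord.symm p) := by
  have hpre : polarCoord.target ∩ Complex.polarCoord.symm ⁻¹' ball 0 r =
      Ioo 0 r ×ˢ Ioo (-Real.pi) Real.pi := by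
    ext ⟨ρ, θ⟩
    simp only [polarCoord_target, mem_inter_iff, mem_preimage, mem_ball_zero_iff,
      Complex.norm_polarCoord_symm, mem_prod, mem_Ioi, mem_Ioo]
    constructor
    · rintro ⟨⟨hρ, hθ⟩, hρr⟩
      exact ⟨⟨hρ, by rwa [abs_of_pos hρ] at hρr⟩, hθ⟩
    · rintro ⟨⟨hρ, hρr⟩, hθ⟩
      exact ⟨⟨hρ, hθ⟩, by rwa [abs_of_pos hρ]⟩
  have hmeas : MeasurableSet (Complex.polarCoord.symm ⁻¹' ball (0 : ℂ) r) :=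
    measurableSet_ball.preimage
      (Complex.measurableEquivRealProd.symm.measurable.comp continuous_polarCoord_symm.measurable)
  rw [← integral_indicator measurableSet_ball, ← Complex.integral_comp_polarCoord_symm,
    ← hpre, ← setIntegral_indicator hmeas]
  congr 1 with p
  rw [indicator_smul_apply, ← indicator_comp_right]
  rfl

theorem integral_Ioo_exp_int_mul_I (n : ℤ) :
    ∫ θ in Ioo (-Real.pi) Real.pi, Complex.exp (n * θ * Complex.I) =
      if n = 0 then ((2 * Real.pi : ℝ) : ℂ) else 0 := by
  rw [← integral_Ioc_eq_integral_Ioo, ← intervalIntegral.integral_of_le (by linarith [Real.pi_pos])]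
  split_ifs with hn
  · simp [hn]; ring
  · have hc : (n : ℂ) * Complex.I ≠ 0 := by simp [hn]
    simp_rw [mul_right_comm _ _ Complex.I]
    rw [integral_exp_mul_complex hc, div_eq_zero_iff, sub_eq_zero]
    exact Or.inl (Complex.exp_eq_exp_iff_exists_int.2 ⟨n, by push_cast; ring⟩)

theorem integral_Ioo_ofReal_pow {r : ℝ} (hr : 0 ≤ r) (n : ℕ) :
    ∫ x in Ioo 0 r, (x : ℂ) ^ n = ((r ^ (n + 1) / (n + 1) : ℝ) : ℂ) := by
  simp_rw [← Complex.ofReal_pow]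
  rw [integral_complex_ofReal, ← integral_Ioc_eq_integral_Ioo, ← intervalIntegral.integral_of_le hr,
    integral_pow]
  simp

theorem integral_ball_pow_mul_conj_pow {r : ℝ} (hr : 0 ≤ r) (j k : ℕ) :
    ∫ z in ball (0 : ℂ) r, z ^ j * (starRingEnd ℂ) z ^ k =
      if j = k then ((Real.pi * r ^ (2 * j + 2) / (j + 1) : ℝ) : ℂ) else 0 := by
  have hpolar (p : ℝ × ℝ) :
      p.1 • (Complex.polarCoord.symm p ^ j * (starRingEnd ℂ) (Complex.polarCoord.symm p) ^ k) =
        (p.1 : ℂ) ^ (j + k + 1) * Complex.exp (((j - k : ℤ) : ℂ) * p.2 * Complex.I) := by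
    rw [Complex.polarCoord_symm_eq_mul_exp, map_mul, Complex.conj_ofReal, ← Complex.exp_conj,
      map_mul, Complex.conj_ofReal, Complex.conj_I, mul_pow, mul_pow, ← Complex.exp_nat_mul,
      ← Complex.exp_nat_mul, Complex.real_smul, mul_mul_mul_comm, ← Complex.exp_add]
    push_cast
    ring_nf
  simp_rw [setIntegral_ball_zero_eq_polar, hpolar, Measure.volume_eq_prod]
  rw [setIntegral_prod_mul (fun x : ℝ => (x : ℂ) ^ (j + k + 1))
    (fun θ : ℝ => Complex.exp (((j - k : ℤ) : ℂ) * θ * Complex.I)),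
    integral_Ioo_ofReal_pow hr, integral_Ioo_exp_int_mul_I]
  simp_rw [sub_eq_zero, Nat.cast_inj]
  split_ifs with hjk
  · subst hjk
    have hj : (j : ℂ) + 1 ≠ 0 := by norm_cast
    push_cast
    rw [show j + j + 1 + 1 = 2 * j + 2 by ring, show (j : ℂ) + j + 1 + 1 = 2 * (j + 1) by ring]
    field_simp
  · rw [mul_zero]

theorem integral_ball_norm_sq_sum_pow {r : ℝ} (hr : 0 ≤ r) (a : ℕ → ℂ) (s : Finset ℕ) :
    ∫ z in ball (0 : ℂ) r, ‖∑ i ∈ s, a i * z ^ i‖ ^ 2 =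
      ∑ i ∈ s, ‖a i‖ ^ 2 * (Real.pi * r ^ (2 * i + 2) / (i + 1)) := by
  have hint (F : ℂ → ℂ) (hF : Continuous F) : IntegrableOn F (ball 0 r) :=
    (hF.continuousOn.integrableOn_compact (isCompact_closedBall 0 r)).mono_set
      ball_subset_closedBall
  have hexpand (z : ℂ) : ((‖∑ i ∈ s, a i * z ^ i‖ ^ 2 : ℝ) : ℂ) =
      ∑ i ∈ s, ∑ k ∈ s, a i * (starRingEnd ℂ) (a k) * (z ^ i * (starRingEnd ℂ) z ^ k) := by
    rw [Complex.ofReal_pow, ← Complex.mul_conj', map_sum, Finset.sum_mul_sum]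
    simp only [map_mul, map_pow]
    exact Finset.sum_congr rfl fun i _ => Finset.sum_congr rfl fun k _ => by ring
  apply Complex.ofReal_injective
  rw [← integral_complex_ofReal]
  simp_rw [hexpand]
  rw [integral_finsetSum _ fun i _ => integrable_finsetSum _ fun k _ => hint _ (by fun_prop)]
  push_cast
  refine Finset.sum_congr rfl fun i hi => ?_
  rw [integral_finsetSum _ fun k _ => hint _ (by fun_prop)]
  simp_rw [integral_const_mul, integral_ball_pow_mul_conj_pow hr, mul_ite, mul_zero,
    Finset.sum_ite_eq s i, if_pos hi, Complex.mul_conj']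
  push_cast
  ring

theorem summable_norm_mul_pow_of_summable_mul_pow {a : ℕ → ℂ} {z : ℂ}
    (hz : Summable fun n => a n * z ^ n) {r : ℝ} (hr0 : 0 ≤ r) (hr : r < ‖z‖) :
    Summable fun n => ‖a n‖ * r ^ n := by
  obtain ⟨M, hM⟩ := (hz.tendsto_atTop_zero.norm.bddAbove_range : BddAbove (range _))
  have hz0 : 0 < ‖z‖ := hr0.trans_lt hr
  refine Summable.of_nonneg_of_le (fun n => by positivity) (fun n => ?_)
    ((summable_geometric_of_lt_one (div_nonneg hr0 hz0.le) ((div_lt_one hz0).2 hr)).mul_left M)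
  calc ‖a n‖ * r ^ n = ‖a n * z ^ n‖ * (r / ‖z‖) ^ n := by
        rw [norm_mul, norm_pow, div_pow, mul_assoc, mul_div_cancel₀ _ (by positivity)]
    _ ≤ M * (r / ‖z‖) ^ n := by gcongr; exact hM (mem_range_self n)

theorem hasSum_integral_ball_norm_sq {a : ℕ → ℂ} {q : ℂ → ℂ} {R : ℝ}
    (hq : ∀ z ∈ ball (0 : ℂ) R, HasSum (fun n => a n * z ^ n) (q z)) {r : ℝ} (hr0 : 0 ≤ r)
    (hrR : r < R) :
    HasSum (fun n => ‖a n‖ ^ 2 * (Real.pi * r ^ (2 * n + 2) / (n + 1)))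
      (∫ z in ball (0 : ℂ) r, ‖q z‖ ^ 2) := by
  obtain ⟨ρ, hrρ, hρR⟩ := exists_between hrR
  have hρ : r < ‖(ρ : ℂ)‖ ∧ ‖(ρ : ℂ)‖ < R := by
    rw [Complex.norm_real, Real.norm_of_nonneg (by linarith)]; exact ⟨hrρ, hρR⟩
  have habs := summable_norm_mul_pow_of_summable_mul_pow
    (hq ρ (mem_ball_zero_iff.2 hρ.2)).summable hr0 hρ.1
  have hbound (N : ℕ) (z : ℂ) (hz : z ∈ ball (0 : ℂ) r) :
      ‖∑ n ∈ Finset.range N, a n * z ^ n‖ ≤ ∑' n, ‖a n‖ * r ^ n := by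
    refine (norm_sum_le _ _).trans ((Finset.sum_le_sum fun n _ => ?_).trans
      (habs.sum_le_tsum _ fun n _ => by positivity))
    rw [norm_mul, norm_pow]
    gcongr
    exact (mem_ball_zero_iff.1 hz).le
  have : IsFiniteMeasure (volume.restrict (ball (0 : ℂ) r)) :=
    isFiniteMeasure_restrict.2 measure_ball_lt_top.ne
  rw [hasSum_iff_tendsto_nat_of_nonneg (fun n => by positivity)]
  simp_rw [← integral_ball_norm_sq_sum_pow hr0]
  refine tendsto_integral_of_dominated_convergence (fun _ => (∑' n, ‖a n‖ * r ^ n) ^ 2)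
    (fun N => by fun_prop) (integrable_const _) (fun N => ?_) ?_
  · refine (ae_restrict_iff' measurableSet_ball).2 (ae_of_all _ fun z hz => ?_)
    rw [norm_pow, norm_norm]
    gcongr
    exact hbound N z hz
  · refine (ae_restrict_iff' measurableSet_ball).2 (ae_of_all _ fun z hz => ?_)
    exact ((hq z (ball_subset_ball hrR.le hz)).tendsto_sum_nat.norm).pow 2

noncomputable def harmonicArea (h g : ℂ → ℂ) (r : ℝ) : ℝ :=
  (Real.pi)⁻¹ * ∫ z in ball (0 : ℂ) r, (‖deriv h z‖ ^ 2 - ‖deriv g z‖ ^ 2)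

theorem hasSum_taylorSeries_deriv {h : ℂ → ℂ} {R : ℝ} (hh : DifferentiableOn ℂ h (ball 0 R))
    {z : ℂ} (hz : z ∈ ball (0 : ℂ) R) :
    HasSum (fun n => ((n ! : ℂ)⁻¹ * iteratedDeriv (n + 1) h 0) * z ^ n) (deriv h z) := by
  refine (Complex.hasSum_taylorSeries_on_ball (hh.deriv isOpen_ball) hz).congr_fun fun n => ?_
  rw [iteratedDeriv_succ', sub_zero, smul_eq_mul, smul_eq_mul]
  ring

theorem hasSum_harmonicArea {h g : ℂ → ℂ} {R : ℝ} (hh : DifferentiableOn ℂ h (ball 0 R))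
    (hg : DifferentiableOn ℂ g (ball 0 R)) {r : ℝ} (hr0 : 0 ≤ r) (hrR : r < R) :
    HasSum (fun n => (‖iteratedDeriv (n + 1) h 0‖ ^ 2 - ‖iteratedDeriv (n + 1) g 0‖ ^ 2) /
        ((n ! : ℝ) ^ 2 * (n + 1)) * r ^ (2 * n + 2)) (harmonicArea h g r) := by
  have hint {q : ℂ → ℂ} (hq : DifferentiableOn ℂ q (ball 0 R)) :
      IntegrableOn (fun z => ‖deriv q z‖ ^ 2) (ball (0 : ℂ) r) := by
    refine (ContinuousOn.integrableOn_compact (isCompact_closedBall 0 r) ?_).mono_set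
      ball_subset_closedBall
    exact ((hq.deriv isOpen_ball).continuousOn.mono (closedBall_subset_ball hrR)).norm.pow 2
  have H := ((hasSum_integral_ball_norm_sq (fun _ => hasSum_taylorSeries_deriv hh) hr0 hrR).sub
    (hasSum_integral_ball_norm_sq (fun _ => hasSum_taylorSeries_deriv hg) hr0 hrR)).mul_left
      (Real.pi)⁻¹
  rw [← integral_sub (hint hh) (hint hg)] at H
  refine H.congr_fun fun n => ?_
  have : (n ! : ℝ) ≠ 0 := by positivity
  simp only [norm_mul, norm_inv, Complex.norm_natCast]
  field_simp

theorem sum_mul_rpow_le_weight_mul_rpow {ι : Type*} (s : Finset ι) {w x : ι → ℝ}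
    (hw : ∀ i, 0 ≤ w i) (hx : ∀ i, 0 ≤ x i) {θ : ℝ} (hθ0 : 0 < θ) (hθ1 : θ ≤ 1) :
    ∑ i ∈ s, w i * x i ^ θ ≤ (∑ i ∈ s, w i) ^ (1 - θ) * (∑ i ∈ s, w i * x i) ^ θ := by
  have := Real.inner_le_weight_mul_Lp_of_nonneg s (one_le_inv₀ hθ0 |>.2 hθ1) w (fun i => x i ^ θ)
    hw fun i => Real.rpow_nonneg (hx i) θ
  simpa only [inv_inv, Real.rpow_rpow_inv (hx _) hθ0.ne'] using this

theorem sum_le_of_hasSum_mul_pow_le {c : ℕ → ℝ} (hc : ∀ n, 0 ≤ c n) {k : ℕ → ℕ}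
    {S : ℝ → ℝ} (hS : ∀ ρ ∈ Ioo 0 1, HasSum (fun n => c n * ρ ^ k n) (S ρ)) {B : ℝ}
    (hB : ∀ ρ ∈ Ioo 0 1, S ρ ≤ B) (s : Finset ℕ) :
    ∑ n ∈ s, c n ≤ B := by
  have hlim : Tendsto (fun ρ : ℝ => ∑ n ∈ s, c n * ρ ^ k n) (𝓝[<] 1) (𝓝 (∑ n ∈ s, c n)) := by
    have hcont : Continuous fun ρ : ℝ => ∑ n ∈ s, c n * ρ ^ k n := by fun_prop
    simpa using (hcont.tendsto 1).mono_left nhdsWithin_le_nhds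
  refine le_of_tendsto hlim ?_
  filter_upwards [Ioo_mem_nhdsLT zero_lt_one] with ρ hρ
  exact (sum_le_hasSum s (fun n _ => mul_nonneg (hc n) (pow_nonneg hρ.1.le _)) (hS ρ hρ)).trans
    (hB ρ hρ)

theorem le_rpow_logb_of_hasSum_mul_pow {c : ℕ → ℝ} (hc : ∀ n, 0 ≤ c n) {k : ℕ → ℕ}
    {S : ℝ → ℝ} (hS : ∀ ρ ∈ Ioo 0 1, HasSum (fun n => c n * ρ ^ k n) (S ρ))
    (hS1 : ∀ ρ ∈ Ioo 0 1, S ρ ≤ 1) {r₁ r m : ℝ} (hr₁0 : 0 < r₁) (hr₁r : r₁ ≤ r) (hr1 : r < 1)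
    (hSr₁ : S r₁ ≤ m) :
    S r ≤ m ^ Real.logb r₁ r := by
  have hr0 : 0 < r := hr₁0.trans_le hr₁r
  have hr₁1 : r₁ < 1 := hr₁r.trans_lt hr1
  set θ := Real.logb r₁ r
  have hθ0 : 0 < θ := Real.logb_pos_of_base_lt_one hr₁0 hr₁1 hr0 hr1
  have hθ1 : θ ≤ 1 := by
    rw [← Real.logb_self_eq_one_iff.2 ⟨hr₁0.ne', hr₁1.ne, by linarith⟩]
    exact (Real.logb_le_logb_of_base_lt_one hr₁0 hr₁1 hr0 hr₁0).2 hr₁r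
  have hr : r₁ ^ θ = r := Real.rpow_logb hr₁0 hr₁1.ne hr0
  refine hasSum_le_of_sum_le (hS r ⟨hr0, hr1⟩) fun s => ?_
  have hA0 : 0 ≤ ∑ n ∈ s, c n * r₁ ^ k n :=
    Finset.sum_nonneg fun n _ => mul_nonneg (hc n) (by positivity)
  have hAm : ∑ n ∈ s, c n * r₁ ^ k n ≤ m :=
    (sum_le_hasSum s (fun n _ => mul_nonneg (hc n) (by positivity)) (hS r₁ ⟨hr₁0, hr₁1⟩)).trans
      hSr₁
  calc ∑ n ∈ s, c n * r ^ k n = ∑ n ∈ s, c n * (r₁ ^ k n) ^ θ := by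
        simp_rw [← Real.rpow_pow_comm hr₁0.le, hr]
    _ ≤ (∑ n ∈ s, c n) ^ (1 - θ) * (∑ n ∈ s, c n * r₁ ^ k n) ^ θ :=
        sum_mul_rpow_le_weight_mul_rpow s hc (fun n => by positivity) hθ0 hθ1
    _ ≤ 1 * m ^ θ :=
        mul_le_mul (Real.rpow_le_one (Finset.sum_nonneg fun n _ => hc n)
          (sum_le_of_hasSum_mul_pow_le hc hS hS1 s) (by linarith))
          (Real.rpow_le_rpow hA0 hAm hθ0.le) (Real.rpow_nonneg hA0 θ) zero_le_one
    _ = m ^ θ := one_mul _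

theorem harmonic_three_circles_area_general (h g : ℂ → ℂ) (r₁ m : ℝ)
    (hh : DifferentiableOn ℂ h (ball (0 : ℂ) 1))
    (hg : DifferentiableOn ℂ g (ball (0 : ℂ) 1))
    (hr₁0 : 0 < r₁)
    (hcoef : ∀ n : ℕ, 1 ≤ n →
      ‖iteratedDeriv n g 0‖ ≤ ‖iteratedDeriv n h 0‖)
    (hSr₁ : (Real.pi)⁻¹ *
        ∫ z in ball (0 : ℂ) r₁,
          (‖deriv h z‖ ^ 2 - ‖deriv g z‖ ^ 2) ≤ m)
    (hS1 : ∀ r : ℝ, 0 < r → r < 1 →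
      (Real.pi)⁻¹ *
          ∫ z in ball (0 : ℂ) r,
            (‖deriv h z‖ ^ 2 - ‖deriv g z‖ ^ 2) ≤ 1) :
    ∀ r : ℝ, r₁ ≤ r → r < 1 →
      (Real.pi)⁻¹ *
          ∫ z in ball (0 : ℂ) r,
            (‖deriv h z‖ ^ 2 - ‖deriv g z‖ ^ 2) ≤
        m ^ (Real.log r / Real.log r₁) := by
  intro r hr₁r hr1
  have hc (n : ℕ) :
      0 ≤ (‖iteratedDeriv (n + 1) h 0‖ ^ 2 - ‖iteratedDeriv (n + 1) g 0‖ ^ 2) /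
        ((n ! : ℝ) ^ 2 * (n + 1)) :=
    div_nonneg (sub_nonneg.2 (pow_le_pow_left₀ (norm_nonneg _) (hcoef _ n.succ_pos) 2))
      (by positivity)
  rw [Real.log_div_log]
  exact le_rpow_logb_of_hasSum_mul_pow hc (fun ρ hρ => hasSum_harmonicArea hh hg hρ.1.le hρ.2)
    (fun ρ hρ => hS1 ρ hρ.1 hρ.2) hr₁0 hr₁r hr1 hSr₁

/-- Three circles type theorem for the harmonic area function. -/
theorem harmonic_three_circles_area (h g : ℂ → ℂ) (r₁ m : ℝ)
    (hh : DifferentiableOn ℂ h (ball (0 : ℂ) 1))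
    (hg : DifferentiableOn ℂ g (ball (0 : ℂ) 1))
    (hr₁0 : 0 < r₁) (hr₁1 : r₁ < 1)
    (hcoef : ∀ n : ℕ, 1 ≤ n →
      ‖iteratedDeriv n g 0‖ ≤ ‖iteratedDeriv n h 0‖)
    (hSr₁ : (Real.pi)⁻¹ *
        ∫ z in ball (0 : ℂ) r₁,
          (‖deriv h z‖ ^ 2 - ‖deriv g z‖ ^ 2) ≤ m)
    (hm1 : m < 1)
    (hS1 : ∀ r : ℝ, 0 < r → r < 1 →
      (Real.pi)⁻¹ *
          ∫ z in ball (0 : ℂ) r,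
            (‖deriv h z‖ ^ 2 - ‖deriv g z‖ ^ 2) ≤ 1) :
    ∀ r : ℝ, r₁ ≤ r → r < 1 →
      (Real.pi)⁻¹ *
          ∫ z in ball (0 : ℂ) r,
            (‖deriv h z‖ ^ 2 - ‖deriv g z‖ ^ 2) ≤
        m ^ (Real.log r / Real.log r₁) :=
  harmonic_three_circles_area_general h g r₁ m hh hg hr₁0 hcoef hSr₁ hS1
end

section
/- Let f be analytic in the unit disk with S_f(r₁) ≤ m and S_f(1) ≤ 1 for some 0 < r₁ < 1 and 0 < m < 1. Then S_f(r) ≤ m^(log r / log r₁) for all r₁ ≤ r < 1. -/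
/-!
Write `A(t) = ∫_{|z|<t} |g|²` with `g = f'`. Substituting `z = u w` gives
`A(|u|) = ∫_𝔻 |u g(u w)|² dw`. For fixed `r`, the function
`G(ζ) = ∫_𝔻 e^ζ g(e^ζ w) · conj (r g(r w)) dw` is holomorphic, equals `A(r)` at `ζ = log r`, and
satisfies `|G(ζ)| ≤ √(A(e^{Re ζ}) A(r))` by Cauchy–Schwarz. Hadamard's three lines theorem on the
strip `log r₁ ≤ Re ζ ≤ log s` then shows that `log A` is convex in `log t`, so that
`A(r) ≤ π m^((log s - log r)/(log s - log r₁))` for every `s ∈ (r, 1)`; let `s → 1`.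
-/

open Metric MeasureTheory

theorem ContinuousOn.memLp_restrict_ball {X : Type*} [PseudoMetricSpace X] [ProperSpace X]
    [MeasurableSpace X] [OpensMeasurableSpace X] {μ : Measure X} [IsFiniteMeasureOnCompacts μ]
    {F : Type*} [NormedAddCommGroup F] {f : X → F} {x : X} {ρ : ℝ}
    (hf : ContinuousOn f (closedBall x ρ)) (p : ENNReal) :
    MemLp f p (μ.restrict (ball x ρ)) := by
  obtain ⟨C, hC⟩ := (isCompact_closedBall x ρ).exists_bound_of_continuousOn hf
  have : IsFiniteMeasure (μ.restrict (ball x ρ)) :=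
    isFiniteMeasure_restrict.2 measure_ball_lt_top.ne
  refine MemLp.of_bound ((hf.mono ball_subset_closedBall).aestronglyMeasurable measurableSet_ball)
    C ?_
  filter_upwards [ae_restrict_mem measurableSet_ball] with y hy
  exact hC y (ball_subset_closedBall hy)

theorem norm_integral_mul_le_sqrt_mul_sqrt {α 𝕜 : Type*} [MeasurableSpace α] {μ : Measure α}
    [RCLike 𝕜] {u v : α → 𝕜} (hu : MemLp u 2 μ) (hv : MemLp v 2 μ) :
    ‖∫ x, u x * v x ∂μ‖ ≤ √(∫ x, ‖u x‖ ^ 2 ∂μ) * √(∫ x, ‖v x‖ ^ 2 ∂μ) := by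
  have h2 : ENNReal.ofReal 2 = 2 := by norm_num
  have holder := integral_mul_norm_le_Lp_mul_Lq (μ := μ) Real.HolderConjugate.two_two
    (h2 ▸ hu) (h2 ▸ hv)
  simp only [Real.rpow_two, ← Real.sqrt_eq_rpow] at holder
  calc ‖∫ x, u x * v x ∂μ‖ ≤ ∫ x, ‖u x * v x‖ ∂μ := norm_integral_le_integral_norm _
    _ = ∫ x, ‖u x‖ * ‖v x‖ ∂μ := by simp only [norm_mul]
    _ ≤ _ := holder

namespace AreaThreeCircles

open Complex ComplexConjugate

section

variable {E : Type*} [NormedAddCommGroup E] [NormedSpace ℝ E]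

theorem setIntegral_unitBall_comp_circle_mul (h : ℂ → E) (a : Circle) :
    ∫ w in ball (0 : ℂ) 1, h (a * w) = ∫ w in ball (0 : ℂ) 1, h w := by
  have hpre : rotation a ⁻¹' ball (0 : ℂ) 1 = ball 0 1 := by
    rw [LinearIsometryEquiv.preimage_ball, map_zero]
  simpa only [hpre, rotation_apply] using
    (rotation a).measurePreserving.setIntegral_preimage_emb
      (rotation a).toHomeomorph.measurableEmbedding h (ball 0 1)

theorem setIntegral_unitBall_comp_mul (h : ℂ → E) {c : ℂ} (hc : c ≠ 0) :
    ∫ w in ball (0 : ℂ) 1, h (c * w) = (‖c‖ ^ 2)⁻¹ • ∫ z in ball (0 : ℂ) ‖c‖, h z := by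
  have hpolar : ∀ w, c * w = ‖c‖ • (Circle.exp (arg c) * w) := fun w => by
    rw [Circle.coe_exp, real_smul, ← mul_assoc, norm_mul_exp_arg_mul_I]
  simp_rw [hpolar]
  rw [setIntegral_unitBall_comp_circle_mul (fun w => h (‖c‖ • w)),
    Measure.setIntegral_comp_smul_of_pos _ _ _ (norm_pos_iff.2 hc),
    smul_unitBall_of_pos (norm_pos_iff.2 hc), Complex.finrank_real_complex]

end

theorem differentiableOn_setIntegral_comp_mul_mul {g φ : ℂ → ℂ} {R : ℝ}
    (hg : DifferentiableOn ℂ g (ball 0 R)) (hφ : IntegrableOn φ (ball 0 1)) :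
    DifferentiableOn ℂ (fun u => ∫ w in ball (0 : ℂ) 1, g (u * w) * φ w) (ball 0 R) := by
  intro u₀ hu₀
  rw [mem_ball_zero_iff] at hu₀
  obtain ⟨ρ, hu₀ρ, hρR⟩ := exists_between hu₀
  replace hρR : closedBall (0 : ℂ) ρ ⊆ ball 0 R := closedBall_subset_ball hρR
  have hmaps : ∀ u ∈ ball u₀ (ρ - ‖u₀‖), ∀ w ∈ ball (0 : ℂ) 1, u * w ∈ closedBall 0 ρ := by
    intro u hu w hw
    rw [mem_closedBall_zero_iff, norm_mul]
    rw [mem_ball_zero_iff] at hw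
    have : ‖u‖ < ρ := by linarith [norm_le_norm_add_norm_sub' u u₀, mem_ball_iff_norm.1 hu]
    nlinarith [norm_nonneg u, norm_nonneg w]
  have hU : ball u₀ (ρ - ‖u₀‖) ∈ nhds u₀ := ball_mem_nhds _ (sub_pos.2 hu₀ρ)
  have hmeas : ∀ {k : ℂ → ℂ}, ContinuousOn k (closedBall 0 ρ) → ∀ u ∈ ball u₀ (ρ - ‖u₀‖),
      AEStronglyMeasurable (fun w => k (u * w)) (volume.restrict (ball 0 1)) :=
    fun hk u hu => (hk.comp (continuous_const_mul u).continuousOn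
      (hmaps u hu)).aestronglyMeasurable measurableSet_ball
  have hgρ : ContinuousOn g (closedBall 0 ρ) := hg.continuousOn.mono hρR
  have hg'ρ : ContinuousOn (deriv g) (closedBall 0 ρ) :=
    (hg.analyticOnNhd isOpen_ball).deriv.continuousOn.mono hρR
  obtain ⟨C, hC⟩ := (isCompact_closedBall (0 : ℂ) ρ).exists_bound_of_continuousOn hgρ
  obtain ⟨C', hC'⟩ := (isCompact_closedBall (0 : ℂ) ρ).exists_bound_of_continuousOn hg'ρ
  have hu₀U := mem_ball_self (x := u₀) (sub_pos.2 hu₀ρ)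
  have key := hasDerivAt_integral_of_dominated_loc_of_deriv_le
    (F := fun u w => g (u * w) * φ w) (F' := fun u w => deriv g (u * w) * w * φ w)
    (bound := fun w => C' * ‖φ w‖) hU
    (Filter.eventually_of_mem hU fun u hu => (hmeas hgρ u hu).mul hφ.aestronglyMeasurable)
    (hφ.bdd_mul (hmeas hgρ u₀ hu₀U) ((ae_restrict_mem measurableSet_ball).mono
      fun w hw => hC _ (hmaps u₀ hu₀U w hw)))
    (((hmeas hg'ρ u₀ hu₀U).mul continuous_id.aestronglyMeasurable).mul hφ.aestronglyMeasurable)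
    ((ae_restrict_mem measurableSet_ball).mono fun w hw u hu => by
      rw [norm_mul, norm_mul]
      gcongr
      calc ‖deriv g (u * w)‖ * ‖w‖ ≤ C' * 1 :=
            mul_le_mul (hC' _ (hmaps u hu w hw)) (mem_ball_zero_iff.1 hw).le (norm_nonneg _)
              ((norm_nonneg _).trans (hC' _ (hmaps u hu w hw)))
        _ = C' := mul_one C')
    (hφ.norm.const_mul C')
    ((ae_restrict_mem measurableSet_ball).mono fun w hw u hu => by
      have hgd := (hg.differentiableAt (isOpen_ball.mem_nhds (hρR (hmaps u hu w hw)))).hasDerivAt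
      simpa using (hgd.comp u ((hasDerivAt_id u).mul_const w)).mul_const (φ w))
  exact key.2.differentiableAt.differentiableWithinAt

theorem le_rpow_mul_rpow_of_le_rpow_mul_rpow_sqrt {x y z τ : ℝ} (hx : 0 ≤ x) (hy : 0 ≤ y)
    (hz : 0 ≤ z) (h : x ≤ (√y * √x) ^ (1 - τ) * (√z * √x) ^ τ) : x ≤ y ^ (1 - τ) * z ^ τ := by
  set Y := √y ^ (1 - τ) * √z ^ τ
  have hY : Y * Y = y ^ (1 - τ) * z ^ τ := by
    calc Y * Y = (√y * √y) ^ (1 - τ) * (√z * √z) ^ τ := by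
          rw [Real.mul_rpow (Real.sqrt_nonneg y) (Real.sqrt_nonneg y),
            Real.mul_rpow (Real.sqrt_nonneg z) (Real.sqrt_nonneg z)]
          ring
      _ = y ^ (1 - τ) * z ^ τ := by rw [Real.mul_self_sqrt hy, Real.mul_self_sqrt hz]
  have hsplit : (√y * √x) ^ (1 - τ) * (√z * √x) ^ τ = Y * √x := by
    rw [Real.mul_rpow (Real.sqrt_nonneg y) (Real.sqrt_nonneg x),
      Real.mul_rpow (Real.sqrt_nonneg z) (Real.sqrt_nonneg x)]
    calc _ = Y * (√x ^ (1 - τ) * √x ^ τ) := by ring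
      _ = Y * √x := by rw [← Real.rpow_add' (Real.sqrt_nonneg x) (by simp), sub_add_cancel,
        Real.rpow_one]
  rcases hx.eq_or_lt with rfl | hxpos
  · rw [← hY]
    exact mul_self_nonneg Y
  · have hsx : 0 < √x := Real.sqrt_pos.2 hxpos
    have hxY : √x ≤ Y := by
      rw [hsplit] at h
      exact le_of_mul_le_mul_right (by rwa [Real.mul_self_sqrt hx]) hsx
    rw [← hY, ← Real.mul_self_sqrt hx]
    exact mul_self_le_mul_self hsx.le hxY

noncomputable def ballSqIntegral (g : ℂ → ℂ) (t : ℝ) : ℝ := ∫ z in ball (0 : ℂ) t, ‖g z‖ ^ 2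

def dilate (g : ℂ → ℂ) (c w : ℂ) : ℂ := c * g (c * w)

variable {g : ℂ → ℂ} {R : ℝ}

theorem ballSqIntegral_nonneg (g : ℂ → ℂ) (t : ℝ) : 0 ≤ ballSqIntegral g t :=
  integral_nonneg fun _ => sq_nonneg _

theorem ballSqIntegral_mono (hg : ContinuousOn g (ball 0 R)) {t s : ℝ} (hts : t ≤ s)
    (hsR : s < R) :
    ballSqIntegral g t ≤ ballSqIntegral g s :=
  setIntegral_mono_set
    (((hg.mono (closedBall_subset_ball hsR)).norm.pow 2).integrableOn_compact
      (isCompact_closedBall 0 s) |>.mono_set ball_subset_closedBall)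
    (Filter.Eventually.of_forall fun _ => sq_nonneg _)
    (ball_subset_ball hts).eventuallyLE

theorem integral_norm_dilate_sq {c : ℂ} (hc : c ≠ 0) :
    ∫ w in ball (0 : ℂ) 1, ‖dilate g c w‖ ^ 2 = ballSqIntegral g ‖c‖ := by
  simp only [dilate, norm_mul, mul_pow]
  rw [integral_const_mul, setIntegral_unitBall_comp_mul (fun z => ‖g z‖ ^ 2) hc, smul_eq_mul,
    ← mul_assoc, mul_inv_cancel₀ (by positivity), one_mul, ballSqIntegral]

theorem memLp_dilate (hg : ContinuousOn g (ball 0 R)) {c : ℂ} (hc : ‖c‖ < R) (p : ENNReal) :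
    MemLp (dilate g c) p (volume.restrict (ball 0 1)) := by
  refine ContinuousOn.memLp_restrict_ball (continuousOn_const.mul (hg.comp
    (continuous_const_mul c).continuousOn fun w hw => ?_)) p
  rw [mem_ball_zero_iff, norm_mul]
  calc ‖c‖ * ‖w‖ ≤ ‖c‖ * 1 := by gcongr; exact mem_closedBall_zero_iff.1 hw
    _ < R := by rwa [mul_one]

theorem norm_integral_dilate_mul_conj_le (hg : ContinuousOn g (ball 0 R)) {u c : ℂ} (hu : u ≠ 0)
    (hc : c ≠ 0) (huR : ‖u‖ < R) (hcR : ‖c‖ < R) :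
    ‖∫ w in ball (0 : ℂ) 1, dilate g u w * conj (dilate g c w)‖ ≤
      √(ballSqIntegral g ‖u‖) * √(ballSqIntegral g ‖c‖) := by
  have h := norm_integral_mul_le_sqrt_mul_sqrt (memLp_dilate hg huR 2)
    (memLp_dilate hg hcR 2).star
  simp only [Pi.star_apply, norm_star] at h
  rwa [integral_norm_dilate_sq hu, integral_norm_dilate_sq hc] at h

theorem integral_dilate_mul_conj_self {c : ℂ} (hc : c ≠ 0) :
    ∫ w in ball (0 : ℂ) 1, dilate g c w * conj (dilate g c w) = ballSqIntegral g ‖c‖ := by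
  simp_rw [mul_conj, normSq_eq_norm_sq]
  rw [integral_complex_ofReal, integral_norm_dilate_sq hc]

theorem differentiableOn_integral_dilate_mul (hg : DifferentiableOn ℂ g (ball 0 R)) {φ : ℂ → ℂ}
    (hφ : IntegrableOn φ (ball 0 1)) :
    DifferentiableOn ℂ (fun u => ∫ w in ball (0 : ℂ) 1, dilate g u w * φ w) (ball 0 R) := by
  simp_rw [dilate, mul_assoc, integral_const_mul]
  exact differentiableOn_id.mul (differentiableOn_setIntegral_comp_mul_mul hg hφ)

open HadamardThreeLines in
theorem closure_verticalStrip {a b : ℝ} (hab : a ≠ b) :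
    closure (verticalStrip a b) = verticalClosedStrip a b := by
  rw [verticalStrip, closure_preimage_re, closure_Ioo hab, verticalClosedStrip]

open HadamardThreeLines in
theorem ballSqIntegral_le_rpow_mul_rpow (hg : DifferentiableOn ℂ g (ball 0 R)) {r₁ r s : ℝ}
    (hr₁ : 0 < r₁) (hr₁r : r₁ ≤ r) (hrs : r ≤ s) (hr₁s : r₁ < s) (hsR : s < R) :
    ballSqIntegral g r ≤ ballSqIntegral g r₁ ^ (1 - (Real.log r - Real.log r₁) /
      (Real.log s - Real.log r₁)) * ballSqIntegral g s ^ ((Real.log r - Real.log r₁) /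
      (Real.log s - Real.log r₁)) := by
  set A := ballSqIntegral g
  have hr : 0 < r := hr₁.trans_le hr₁r
  have hs : 0 < s := hr₁.trans hr₁s
  have hrC : (r : ℂ) ≠ 0 := ofReal_ne_zero.2 hr.ne'
  have hnorm_r : ‖(r : ℂ)‖ = r := by rw [norm_real, Real.norm_of_nonneg hr.le]
  have hrR : ‖(r : ℂ)‖ < R := by rw [hnorm_r]; exact hrs.trans_lt hsR
  set G : ℂ → ℂ := fun ζ => ∫ w in ball (0 : ℂ) 1, dilate g (exp ζ) w * conj (dilate g r w)
  have hexp_lt : ∀ ζ : ℂ, ζ.re ≤ Real.log s → ‖exp ζ‖ < R := fun ζ hζ => by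
    rw [norm_exp]
    exact ((Real.exp_le_exp.2 hζ).trans_eq (Real.exp_log hs)).trans_lt hsR
  have hG_le : ∀ ζ : ℂ, ζ.re ≤ Real.log s → ‖G ζ‖ ≤ √(A (Real.exp ζ.re)) * √(A r) :=
    fun ζ hζ => by
      simpa only [norm_exp, hnorm_r] using norm_integral_dilate_mul_conj_le hg.continuousOn
        (exp_ne_zero ζ) hrC (hexp_lt ζ hζ) hrR
  have hGr : G (Real.log r) = A r := by
    simp only [G, ← ofReal_exp, Real.exp_log hr]
    rw [integral_dilate_mul_conj_self hrC, hnorm_r]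
  have hd : DiffContOnCl ℂ G (verticalStrip (Real.log r₁) (Real.log s)) := by
    have hφ : IntegrableOn (fun w => conj (dilate g r w)) (ball 0 1) :=
      memLp_one_iff_integrable.1 (memLp_dilate hg.continuousOn hrR 1).star
    exact DifferentiableOn.diffContOnCl <| (differentiableOn_integral_dilate_mul hg hφ).comp
      differentiable_exp.differentiableOn fun ζ hζ =>
        mem_ball_zero_iff.2 (hexp_lt ζ
          ((closure_verticalStrip (Real.log_lt_log hr₁ hr₁s).ne).subset hζ).2)
  have hB : BddAbove ((norm ∘ G) '' verticalClosedStrip (Real.log r₁) (Real.log s)) := by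
    refine ⟨√(A s) * √(A r), ?_⟩
    rintro _ ⟨ζ, hζ, rfl⟩
    refine (hG_le ζ hζ.2).trans ?_
    gcongr
    refine ballSqIntegral_mono hg.continuousOn ?_ hsR
    exact (Real.exp_le_exp.2 hζ.2).trans_eq (Real.exp_log hs)
  have hedge : ∀ t, 0 < t → t ≤ s → ∀ ζ ∈ re ⁻¹' {Real.log t}, ‖G ζ‖ ≤ √(A t) * √(A r) := by
    intro t ht hts ζ hζ
    have hre : ζ.re = Real.log t := hζ
    simpa only [hre, Real.exp_log ht] using hG_le ζ (hre ▸ Real.log_le_log ht hts)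
  have hz : ((Real.log r : ℝ) : ℂ) ∈ verticalClosedStrip (Real.log r₁) (Real.log s) := by
    simp only [verticalClosedStrip, Set.mem_preimage, ofReal_re, Set.mem_Icc]
    exact ⟨Real.log_le_log hr₁ hr₁r, Real.log_le_log hr hrs⟩
  have key := norm_le_interp_of_mem_verticalClosedStrip' (Real.log_lt_log hr₁ hr₁s) hz hd hB
    (hedge r₁ hr₁ hr₁s.le) (hedge s hs le_rfl)
  rw [hGr, norm_real, Real.norm_of_nonneg (ballSqIntegral_nonneg g r), ofReal_re] at key
  exact le_rpow_mul_rpow_of_le_rpow_mul_rpow_sqrt (ballSqIntegral_nonneg g r)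
    (ballSqIntegral_nonneg g r₁) (ballSqIntegral_nonneg g s) key

theorem ballSqIntegral_le_mul_rpow (hg : DifferentiableOn ℂ g (ball 0 R)) {r₁ r s M m : ℝ}
    (hr₁ : 0 < r₁) (hr₁r : r₁ ≤ r) (hrs : r ≤ s) (hr₁s : r₁ < s) (hsR : s < R) (hm : 0 ≤ m)
    (hA₁ : ballSqIntegral g r₁ ≤ M * m) (hA : ballSqIntegral g s ≤ M) :
    ballSqIntegral g r ≤
      M * m ^ ((Real.log s - Real.log r) / (Real.log s - Real.log r₁)) := by
  set τ := (Real.log r - Real.log r₁) / (Real.log s - Real.log r₁)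
  have hden : 0 < Real.log s - Real.log r₁ := sub_pos.2 (Real.log_lt_log hr₁ hr₁s)
  have hτ0 : 0 ≤ τ := div_nonneg (sub_nonneg.2 (Real.log_le_log hr₁ hr₁r)) hden.le
  have hτ1 : 0 ≤ 1 - τ := by
    rw [sub_nonneg, div_le_one hden]
    linarith [Real.log_le_log (hr₁.trans_le hr₁r) hrs]
  have hM : 0 ≤ M := (ballSqIntegral_nonneg g s).trans hA
  have hexp : 1 - τ = (Real.log s - Real.log r) / (Real.log s - Real.log r₁) := by
    rw [eq_div_iff hden.ne', sub_mul, div_mul_cancel₀ _ hden.ne']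
    ring
  calc ballSqIntegral g r ≤ ballSqIntegral g r₁ ^ (1 - τ) * ballSqIntegral g s ^ τ :=
        ballSqIntegral_le_rpow_mul_rpow hg hr₁ hr₁r hrs hr₁s hsR
    _ ≤ (M * m) ^ (1 - τ) * M ^ τ :=
        mul_le_mul (Real.rpow_le_rpow (ballSqIntegral_nonneg g r₁) hA₁ hτ1)
          (Real.rpow_le_rpow (ballSqIntegral_nonneg g s) hA hτ0)
          (Real.rpow_nonneg (ballSqIntegral_nonneg g s) τ) (Real.rpow_nonneg (by positivity) _)
    _ = M * m ^ (1 - τ) := by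
        rw [Real.mul_rpow hM hm, mul_right_comm, ← Real.rpow_add' hM (by simp), sub_add_cancel,
          Real.rpow_one]
    _ = _ := by rw [hexp]

theorem le_rpow_log_div_log_of_forall_lt_one {x m r r₁ : ℝ} (hm : 0 < m)
    (hr₁ : Real.log r₁ ≠ 0) (hr : r < 1)
    (h : ∀ s ∈ Set.Ioo r 1, x ≤ m ^ ((Real.log s - Real.log r) / (Real.log s - Real.log r₁))) :
    x ≤ m ^ (Real.log r / Real.log r₁) := by
  have hcont : ContinuousAt
      (fun s => m ^ ((Real.log s - Real.log r) / (Real.log s - Real.log r₁))) 1 := by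
    refine continuousAt_const.rpow ?_ (Or.inl hm.ne')
    refine ((Real.continuousAt_log one_ne_zero).sub continuousAt_const).div
      ((Real.continuousAt_log one_ne_zero).sub continuousAt_const) ?_
    simpa using hr₁
  have hlim := hcont.tendsto.mono_left (nhdsWithin_le_nhds (s := Set.Iio 1))
  simp only [Real.log_one, zero_sub, neg_div_neg_eq] at hlim
  exact ge_of_tendsto hlim (Filter.mem_of_superset (Ioo_mem_nhdsLT hr) h)

end AreaThreeCircles

open AreaThreeCircles in
theorem analytic_three_circles_area_general (f : ℂ → ℂ) (r₁ m : ℝ)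
    (hf : DifferentiableOn ℂ f (ball (0 : ℂ) 1))
    (hr₁0 : 0 < r₁) (hm0 : 0 < m)
    (hSr₁ : (Real.pi)⁻¹ *
        ∫ z in ball (0 : ℂ) r₁, ‖deriv f z‖ ^ 2 ≤ m)
    (hS1 : ∀ r : ℝ, 0 < r → r < 1 →
      (Real.pi)⁻¹ * ∫ z in ball (0 : ℂ) r, ‖deriv f z‖ ^ 2 ≤ 1) :
    ∀ r : ℝ, r₁ ≤ r → r < 1 →
      (Real.pi)⁻¹ * ∫ z in ball (0 : ℂ) r, ‖deriv f z‖ ^ 2 ≤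
        m ^ (Real.log r / Real.log r₁) := by
  intro r hr₁r hr1
  have hf' : DifferentiableOn ℂ (deriv f) (ball 0 1) :=
    (hf.analyticOnNhd isOpen_ball).deriv.differentiableOn
  refine le_rpow_log_div_log_of_forall_lt_one hm0 (Real.log_neg hr₁0 (hr₁r.trans_lt hr1)).ne hr1
    fun s hs => (inv_mul_le_iff₀ Real.pi_pos).2 ?_
  exact ballSqIntegral_le_mul_rpow hf' hr₁0 hr₁r hs.1.le (hr₁r.trans_lt hs.1) hs.2 hm0.le
    ((inv_mul_le_iff₀ Real.pi_pos).1 hSr₁)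
    (((inv_mul_le_iff₀ Real.pi_pos).1 (hS1 s (hr₁0.trans_le hr₁r |>.trans hs.1) hs.2)).trans_eq
      (mul_one _))

/-- Three circles type theorem for the area function of an analytic function. -/
theorem analytic_three_circles_area (f : ℂ → ℂ) (r₁ m : ℝ)
    (hf : DifferentiableOn ℂ f (ball (0 : ℂ) 1))
    (hr₁0 : 0 < r₁) (hr₁1 : r₁ < 1) (hm0 : 0 < m) (hm1 : m < 1)
    (hSr₁ : (Real.pi)⁻¹ *
        ∫ z in ball (0 : ℂ) r₁, ‖deriv f z‖ ^ 2 ≤ m)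
    (hS1 : ∀ r : ℝ, 0 < r → r < 1 →
      (Real.pi)⁻¹ * ∫ z in ball (0 : ℂ) r, ‖deriv f z‖ ^ 2 ≤ 1) :
    ∀ r : ℝ, r₁ ≤ r → r < 1 →
      (Real.pi)⁻¹ * ∫ z in ball (0 : ℂ) r, ‖deriv f z‖ ^ 2 ≤
        m ^ (Real.log r / Real.log r₁) :=
  analytic_three_circles_area_general f r₁ m hf hr₁0 hm0 hSr₁ hS1
end

section
/- Let f = h + conj(g) be a sense-preserving K-quasiregular harmonic mapping on the unit disk with coefficients h(z) = Σ aₙ zⁿ, g(z) = Σ bₙ zⁿ. Then for every n ≥ 1, |aₙ| + |bₙ| ≤ K·l_f(1)/(2nπ), where l_f(1) = sup_{0<r<1} l_f(r) is assumed finite. If K = 1 the estimate is sharp, attained by f(z) = z. -/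
open Metric MeasureTheory ComplexConjugate

/-!
Cauchy's estimate for the power series of `h'` on the circle `|z| = r` gives
`n |aₙ| rⁿ⁻¹ ≤ (2π)⁻¹ ∫ |h'(re^{iθ})| dθ`, and likewise for `g`. Quasiregularity bounds
`|h'| + |g'|` by `K (|h'| - |g'|) ≤ K |h' - e^{-2iθ} conj g'|`, whose integral is
`l_f(r) / r ≤ L / r`. Letting `r → 1` gives the estimate.
-/

open Filter Topology FormalMultilinearSeries Real NNReal ENNReal

theorem hasFPowerSeriesOnBall_ofScalars_of_hasSum {f : ℂ → ℂ} {a : ℕ → ℂ} {R : ℝ≥0}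
    (hR : 0 < R) (ha : ∀ z ∈ ball (0 : ℂ) R, HasSum (fun n ↦ a n * z ^ n) (f z)) :
    HasFPowerSeriesOnBall f (ofScalars ℂ a) 0 R where
  r_le := by
    refine ENNReal.le_of_forall_nnreal_lt fun s hs ↦ le_radius_of_summable _ ?_
    have hs : ((s : ℝ) : ℂ) ∈ ball (0 : ℂ) R := by simpa using hs
    simpa [ofScalars_norm, Complex.norm_real] using (ha _ hs).summable.norm
  r_pos := by simpa using hR
  hasSum {y} hy := by
    simpa [ofScalars_apply_eq, mul_comm] using ha y (by simpa using hy)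

theorem HasFPowerSeriesOnBall.deriv {𝕜 F : Type*} [NontriviallyNormedField 𝕜]
    [NormedAddCommGroup F] [NormedSpace 𝕜 F] [CompleteSpace F]
    {f : 𝕜 → F} {p : FormalMultilinearSeries 𝕜 𝕜 F} {x : 𝕜} {r : ℝ≥0∞}
    (hf : HasFPowerSeriesOnBall f p x r) :
    HasFPowerSeriesOnBall (deriv f)
      ((ContinuousLinearMap.apply 𝕜 F 1).compFormalMultilinearSeries p.derivSeries) x r :=
  (ContinuousLinearMap.apply 𝕜 F 1).comp_hasFPowerSeriesOnBall (f := fderiv 𝕜 f) hf.fderiv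

theorem HasFPowerSeriesAt.norm_coeff_mul_pow_le_circleIntegral {E : Type*}
    [NormedAddCommGroup E] [NormedSpace ℂ E] [CompleteSpace E]
    {f : ℂ → E} {p : FormalMultilinearSeries ℂ ℂ E} {c : ℂ} (hf : HasFPowerSeriesAt f p c)
    {r : ℝ≥0} (hr : 0 < r) (hd : DifferentiableOn ℂ f (closedBall c r)) (n : ℕ) :
    ‖p.coeff n‖ * r ^ n ≤ (2 * π)⁻¹ * ∫ θ in (0 : ℝ)..2 * π, ‖f (circleMap c r θ)‖ := by
  have hp : p = cauchyPowerSeries f c r :=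
    hf.eq_formalMultilinearSeries (hd.hasFPowerSeriesOnBall hr).hasFPowerSeriesAt
  have hr' : (r : ℝ) ≠ 0 := NNReal.coe_ne_zero.mpr hr.ne'
  calc ‖p.coeff n‖ * r ^ n = ‖cauchyPowerSeries f c r n‖ * r ^ n := by
        rw [← norm_apply_eq_norm_coef, hp]
    _ ≤ ((2 * π)⁻¹ * ∫ θ in (0 : ℝ)..2 * π, ‖f (circleMap c r θ)‖) * |(r : ℝ)|⁻¹ ^ n * r ^ n := by
        gcongr
        exact norm_cauchyPowerSeries_le f c r n
    _ = (2 * π)⁻¹ * ∫ θ in (0 : ℝ)..2 * π, ‖f (circleMap c r θ)‖ := by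
        rw [NNReal.abs_eq, mul_assoc, ← mul_pow, inv_mul_cancel₀ hr', one_pow, mul_one]

theorem hasFPowerSeriesOnBall_deriv_of_hasSum {f : ℂ → ℂ} {a : ℕ → ℂ} {R : ℝ≥0} (hR : 0 < R)
    (ha : ∀ z ∈ ball (0 : ℂ) R, HasSum (fun n ↦ a n * z ^ n) (f z)) :
    ∃ q : FormalMultilinearSeries ℂ ℂ ℂ, HasFPowerSeriesOnBall (deriv f) q 0 R ∧
      ∀ n, q.coeff n = (n + 1) * a (n + 1) := by
  refine ⟨_, (hasFPowerSeriesOnBall_ofScalars_of_hasSum hR ha).deriv, fun n ↦ ?_⟩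
  refine ((ofScalars ℂ a).derivSeries_coeff_one n).trans ?_
  simp [nsmul_eq_mul]

theorem continuousOn_deriv_of_hasSum {f : ℂ → ℂ} {a : ℕ → ℂ} {R : ℝ≥0} (hR : 0 < R)
    (ha : ∀ z ∈ ball (0 : ℂ) R, HasSum (fun n ↦ a n * z ^ n) (f z)) :
    ContinuousOn (deriv f) (ball 0 R) := by
  obtain ⟨q, hq, -⟩ := hasFPowerSeriesOnBall_deriv_of_hasSum hR ha
  simpa using hq.continuousOn

theorem norm_coeff_succ_mul_pow_le_circleIntegral_norm_deriv {f : ℂ → ℂ} {a : ℕ → ℂ}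
    {R r : ℝ≥0} (hr : 0 < r) (hrR : r < R)
    (ha : ∀ z ∈ ball (0 : ℂ) R, HasSum (fun n ↦ a n * z ^ n) (f z)) (n : ℕ) :
    (n + 1) * ‖a (n + 1)‖ * r ^ n ≤
      (2 * π)⁻¹ * ∫ θ in (0 : ℝ)..2 * π, ‖deriv f (circleMap 0 r θ)‖ := by
  obtain ⟨q, hq, hqa⟩ := hasFPowerSeriesOnBall_deriv_of_hasSum (hr.trans hrR) ha
  have hd : DifferentiableOn ℂ (deriv f) (closedBall 0 r) :=
    hq.differentiableOn.mono (by simpa using closedBall_subset_ball (α := ℂ) (x := 0) hrR)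
  have hn : ‖(n + 1 : ℂ)‖ = n + 1 := by exact_mod_cast Complex.norm_natCast (n + 1)
  simpa [hqa, hn] using hq.hasFPowerSeriesAt.norm_coeff_mul_pow_le_circleIntegral hr hd n

theorem norm_add_norm_le_mul_norm_sub_mul_conj {K : ℝ} (hK : 0 ≤ K) {p q u : ℂ} (hu : ‖u‖ = 1)
    (hpq : ‖p‖ + ‖q‖ ≤ K * (‖p‖ - ‖q‖)) : ‖p‖ + ‖q‖ ≤ K * ‖p - u * conj q‖ := by
  refine hpq.trans (mul_le_mul_of_nonneg_left ?_ hK)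
  simpa [hu] using norm_sub_norm_le p (u * conj q)

theorem integral_norm_add_integral_norm_le {F G : ℂ → ℂ} {K r : ℝ} (hK : 0 ≤ K) (hr : 0 ≤ r)
    (hF : ContinuousOn F (sphere 0 r)) (hG : ContinuousOn G (sphere 0 r))
    (hFG : ∀ z ∈ sphere (0 : ℂ) r, ‖F z‖ + ‖G z‖ ≤ K * (‖F z‖ - ‖G z‖)) :
    (∫ θ in (0 : ℝ)..2 * π, ‖F (circleMap 0 r θ)‖) + ∫ θ in (0 : ℝ)..2 * π, ‖G (circleMap 0 r θ)‖ ≤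
      K * ∫ θ in (0 : ℝ)..2 * π,
        ‖F (circleMap 0 r θ) - Complex.exp (-2 * θ * Complex.I) * conj (G (circleMap 0 r θ))‖ := by
  have hmem (θ : ℝ) : circleMap 0 r θ ∈ sphere (0 : ℂ) r := circleMap_mem_sphere 0 hr θ
  have hFc : Continuous fun θ ↦ F (circleMap 0 r θ) :=
    hF.comp_continuous (continuous_circleMap 0 r) hmem
  have hGc : Continuous fun θ ↦ G (circleMap 0 r θ) :=
    hG.comp_continuous (continuous_circleMap 0 r) hmem
  have hexp (θ : ℝ) : ‖Complex.exp (-2 * θ * Complex.I)‖ = 1 := by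
    simpa using Complex.norm_exp_ofReal_mul_I (-2 * θ)
  rw [← intervalIntegral.integral_add (hFc.norm.intervalIntegrable _ _)
    (hGc.norm.intervalIntegrable _ _), ← intervalIntegral.integral_const_mul]
  refine intervalIntegral.integral_mono_on (by positivity)
    ((hFc.norm.add hGc.norm).intervalIntegrable _ _)
    ((continuous_const.mul (hFc.sub ((by fun_prop : Continuous fun θ : ℝ ↦
      Complex.exp (-2 * θ * Complex.I)).mul (Complex.continuous_conj.comp hGc))).norm)
      |>.intervalIntegrable _ _)
    fun θ _ ↦ norm_add_norm_le_mul_norm_sub_mul_conj hK (hexp θ) (hFG _ (hmem θ))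

theorem le_of_forall_mul_pow_le {c M : ℝ} (k : ℕ) (h : ∀ r : ℝ, 0 < r → r < 1 → c * r ^ k ≤ M) :
    c ≤ M := by
  have hlim : Tendsto (fun r : ℝ ↦ c * r ^ k) (𝓝[<] 1) (𝓝 c) :=
    ((continuous_const.mul (continuous_pow k)).tendsto' 1 c (by simp)).mono_left nhdsWithin_le_nhds
  refine le_of_tendsto hlim ?_
  filter_upwards [Ioo_mem_nhdsLT zero_lt_one] with r hr using h r hr.1 hr.2

theorem coefficient_estimate_general (h g : ℂ → ℂ) (a b : ℕ → ℂ) (K L : ℝ) (hK : 1 ≤ K)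
    (ha : ∀ z ∈ ball (0 : ℂ) 1, HasSum (fun n : ℕ => a n * z ^ n) (h z))
    (hb : ∀ z ∈ ball (0 : ℂ) 1, HasSum (fun n : ℕ => b n * z ^ n) (g z))
    (hqr : ∀ z ∈ ball (0 : ℂ) 1,
      ‖deriv h z‖ + ‖deriv g z‖ ≤
        K * (‖deriv h z‖ - ‖deriv g z‖))
    (hL : ∀ r : ℝ, 0 < r → r < 1 →
      r * ∫ θ in (0 : ℝ)..(2 * Real.pi),
          ‖deriv h ((r : ℂ) * Complex.exp (θ * Complex.I)) -
            Complex.exp (-2 * θ * Complex.I) *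
              conj (deriv g ((r : ℂ) * Complex.exp (θ * Complex.I)))‖ ≤ L) :
    ∀ n : ℕ, 1 ≤ n →
      ‖a n‖ + ‖b n‖ ≤ K * L / (2 * n * Real.pi) := by
  intro n hn
  obtain ⟨m, rfl⟩ := Nat.exists_eq_add_of_le' hn
  refine le_of_forall_mul_pow_le (m + 1) fun r hr0 hr1 ↦ ?_
  lift r to ℝ≥0 using hr0.le
  have hsub : sphere (0 : ℂ) r ⊆ ball 0 1 := sphere_subset_ball hr1
  have hlen := integral_norm_add_integral_norm_le (zero_le_one.trans hK) r.2
    ((continuousOn_deriv_of_hasSum one_pos (by simpa using ha)).mono (by simpa using hsub))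
    ((continuousOn_deriv_of_hasSum one_pos (by simpa using hb)).mono (by simpa using hsub))
    fun z hz ↦ hqr z (hsub hz)
  have hr1' : r < (1 : ℝ≥0) := by exact_mod_cast hr1
  have hcoeff := add_le_add
    (norm_coeff_succ_mul_pow_le_circleIntegral_norm_deriv hr0 hr1' (by simpa using ha) m)
    (norm_coeff_succ_mul_pow_le_circleIntegral_norm_deriv hr0 hr1' (by simpa using hb) m)
  have hLr := hL r hr0 hr1
  simp only [← circleMap_zero] at hLr
  set Ih := ∫ θ in (0 : ℝ)..2 * π, ‖deriv h (circleMap 0 r θ)‖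
  set Ig := ∫ θ in (0 : ℝ)..2 * π, ‖deriv g (circleMap 0 r θ)‖
  set J := ∫ θ in (0 : ℝ)..2 * π, ‖deriv h (circleMap 0 r θ) -
    Complex.exp (-2 * θ * Complex.I) * conj (deriv g (circleMap 0 r θ))‖
  rw [le_div_iff₀ (by positivity)]
  calc (‖a (m + 1)‖ + ‖b (m + 1)‖) * r ^ (m + 1) * (2 * ↑(m + 1) * π)
      = 2 * π * r * ((m + 1) * ‖a (m + 1)‖ * r ^ m + (m + 1) * ‖b (m + 1)‖ * r ^ m) := by
        push_cast; ring
    _ ≤ 2 * π * r * ((2 * π)⁻¹ * Ih + (2 * π)⁻¹ * Ig) := by gcongr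
    _ = r * (Ih + Ig) := by field_simp
    _ ≤ r * (K * J) := by gcongr; exact hlen
    _ = K * (r * J) := by ring
    _ ≤ K * L := by gcongr

/-- Coefficient estimates for sense-preserving `K`-quasiregular harmonic mappings
`f = h + conj g` with bounded length function: `|aₙ| + |bₙ| ≤ K l_f(1) / (2nπ)`. -/
theorem coefficient_estimate (h g : ℂ → ℂ) (a b : ℕ → ℂ) (K L : ℝ) (hK : 1 ≤ K)
    (hh : DifferentiableOn ℂ h (ball (0 : ℂ) 1))
    (hg : DifferentiableOn ℂ g (ball (0 : ℂ) 1))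
    (ha : ∀ z ∈ ball (0 : ℂ) 1, HasSum (fun n : ℕ => a n * z ^ n) (h z))
    (hb : ∀ z ∈ ball (0 : ℂ) 1, HasSum (fun n : ℕ => b n * z ^ n) (g z))
    (hsp : ∀ z ∈ ball (0 : ℂ) 1, ‖deriv g z‖ < ‖deriv h z‖)
    (hqr : ∀ z ∈ ball (0 : ℂ) 1,
      ‖deriv h z‖ + ‖deriv g z‖ ≤
        K * (‖deriv h z‖ - ‖deriv g z‖))
    (hL : ∀ r : ℝ, 0 < r → r < 1 →
      r * ∫ θ in (0 : ℝ)..(2 * Real.pi),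
          ‖deriv h ((r : ℂ) * Complex.exp (θ * Complex.I)) -
            Complex.exp (-2 * θ * Complex.I) *
              conj (deriv g ((r : ℂ) * Complex.exp (θ * Complex.I)))‖ ≤ L) :
    ∀ n : ℕ, 1 ≤ n →
      ‖a n‖ + ‖b n‖ ≤ K * L / (2 * n * Real.pi) :=
  coefficient_estimate_general h g a b K L hK ha hb hqr hL
end

section
/- Let f be a sense-preserving K-quasiregular harmonic mapping on the unit disk with l_f(1) = sup_{0<r<1} l_f(r) < ∞. Then Λ_f(z) ≤ l_f(1)·√K / (2π(1 − |z|)) for all z in 𝔻. Consequently f is a harmonic Bloch mapping with Bloch number β_f ≤ l_f(1)·√K/π. -/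
/-!
For `f = h + conj g` one has `∂_θ f(re^{iθ}) = i r e^{iθ} (h' - e^{-2iθ} conj g')`, and on the
circle `|w| = r` the factor `e^{-2iθ}` is `(r / w)²`. The Cauchy integral of
`(r / w)² conj (g' w)` against `(w - z)⁻¹` vanishes, because its conjugate is the integral of the
holomorphic function `w g'(w) / (r² - conj z · w)`. Cauchy's formula for `h'` therefore gives
`(r - |z|) · 2π |h'(z)| ≤ l_f(r) ≤ L`, and `r → 1` yields `2π (1 - |z|) |h'(z)| ≤ L`.
Quasiregularity gives `(|h'| + |g'|)² ≤ K (|h'|² - |g'|²) ≤ K |h'|²`, i.e. `Λ_f ≤ √K |h'|`.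
-/

open Metric MeasureTheory ComplexConjugate Complex Real Filter Set Topology

theorem conj_circleIntegral (f : ℂ → ℂ) (c : ℂ) (R : ℝ) :
    conj (∮ w in C(c, R), f w) = -∮ w in C(c, R), (R / (w - c)) ^ 2 * conj (f w) := by
  rcases eq_or_ne R 0 with rfl | hR
  · simp [circleIntegral.integral_radius_zero]
  simp only [circleIntegral, ← intervalIntegral.intervalIntegral_conj,
    ← intervalIntegral.integral_neg]
  refine intervalIntegral.integral_congr fun θ _ => ?_
  have hw : circleMap 0 R θ ≠ 0 := circleMap_ne_center hR
  simp only [deriv_circleMap, circleMap_sub_center, smul_eq_mul, map_mul, conj_circleMap_zero,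
    conj_I]
  rw [circleMap_zero R (-θ), circleMap_zero R θ] at *
  simp only [ofReal_neg, neg_mul, Complex.exp_neg]
  field_simp

theorem circleIntegral_sub_inv_mul_div_sq_mul_conj_eq_zero {G : ℂ → ℂ} {r : ℝ} {z : ℂ}
    (hG : DiffContOnCl ℂ G (ball 0 r)) (hz : ‖z‖ < r) :
    ∮ w in C(0, r), (w - z)⁻¹ * ((r / w) ^ 2 * conj (G w)) = 0 := by
  have hr : 0 < r := (norm_nonneg z).trans_lt hz
  have hden : ∀ w ∈ closure (ball (0 : ℂ) r), (r : ℂ) ^ 2 - conj z * w ≠ 0 := by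
    intro w hw h
    have hnorm := congrArg norm (sub_eq_zero.mp h)
    rw [closure_ball 0 hr.ne', mem_closedBall_zero_iff] at hw
    simp only [norm_pow, norm_mul, Complex.norm_conj, norm_real, Real.norm_eq_abs,
      abs_of_pos hr] at hnorm
    nlinarith [norm_nonneg w, mul_le_mul_of_nonneg_left hw (norm_nonneg z)]
  set F : ℂ → ℂ := fun w => ((r : ℂ) ^ 2 - conj z * w)⁻¹ * (w * G w)
  have hF : DiffContOnCl ℂ F (ball 0 r) :=
    ((Differentiable.diffContOnCl (by fun_prop)).inv hden).smul
      ((differentiable_id.diffContOnCl).smul hG)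
  have hconjF : EqOn (fun w => (w - z)⁻¹ * ((r / w) ^ 2 * conj (G w)))
      (fun w => (r / (w - 0)) ^ 2 * conj (F w)) (sphere 0 r) := by
    intro w hw
    rw [mem_sphere_zero_iff_norm] at hw
    have hw0 : w ≠ 0 := norm_pos_iff.mp (hw ▸ hr)
    have hwz : w - z ≠ 0 := sub_ne_zero.mpr fun h => (h ▸ hz).ne hw
    have hconj : conj w = r ^ 2 / w := by
      rw [eq_div_iff hw0, mul_comm, Complex.mul_conj, Complex.normSq_eq_norm_sq, hw]
      push_cast; ring
    simp only [F, sub_zero, map_inv₀, map_mul, Complex.conj_conj, map_sub, map_pow,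
      Complex.conj_ofReal, hconj]
    field_simp
  rw [circleIntegral.integral_congr hr.le hconjF, ← neg_eq_zero, ← conj_circleIntegral,
    hF.circleIntegral_eq_zero hr.le, map_zero]

theorem continuousOn_div_sq_mul_conj {G : ℂ → ℂ} {r : ℝ} (hr : 0 < r)
    (hG : DiffContOnCl ℂ G (ball 0 r)) :
    ContinuousOn (fun w => (r / w) ^ 2 * conj (G w)) (sphere 0 r) := by
  refine ((continuousOn_const.div continuousOn_id fun w hw => ?_).pow 2).mul
    (continuous_conj.comp_continuousOn (hG.continuousOn_ball.mono sphere_subset_closedBall))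
  exact ne_zero_of_mem_sphere hr.ne' ⟨w, hw⟩

theorem circleIntegral_sub_inv_mul_sub_div_sq_mul_conj {H G : ℂ → ℂ} {r : ℝ} {z : ℂ}
    (hH : DiffContOnCl ℂ H (ball 0 r)) (hG : DiffContOnCl ℂ G (ball 0 r)) (hz : ‖z‖ < r) :
    ∮ w in C(0, r), (w - z)⁻¹ * (H w - (r / w) ^ 2 * conj (G w)) = 2 * π * I * H z := by
  have hr : 0 < r := (norm_nonneg z).trans_lt hz
  have hinv : ContinuousOn (fun w => (w - z)⁻¹) (sphere 0 r) :=
    (continuousOn_id.sub continuousOn_const).inv₀ fun w hw =>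
      sub_ne_zero.mpr <| show w ≠ z by
        rintro rfl; exact hz.ne (mem_sphere_zero_iff_norm.mp hw)
  have hA : CircleIntegrable (fun w => (w - z)⁻¹ * H w) 0 r :=
    (hinv.mul (hH.continuousOn_ball.mono sphere_subset_closedBall)).circleIntegrable hr.le
  have hB : CircleIntegrable (fun w => (w - z)⁻¹ * ((r / w) ^ 2 * conj (G w))) 0 r :=
    (hinv.mul (continuousOn_div_sq_mul_conj hr hG)).circleIntegrable hr.le
  simp only [mul_sub]
  rw [circleIntegral.integral_sub hA hB,
    circleIntegral_sub_inv_mul_div_sq_mul_conj_eq_zero hG hz, sub_zero]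
  exact hH.circleIntegral_sub_inv_smul (mem_ball_zero_iff.mpr hz)

theorem ofReal_div_mul_exp_sq {r : ℝ} (hr : r ≠ 0) (θ : ℝ) :
    ((r : ℂ) / (r * exp (θ * I))) ^ 2 = exp (-2 * θ * I) := by
  rw [div_mul_cancel_left₀ (ofReal_ne_zero.mpr hr), inv_pow, ← Complex.exp_nat_mul,
    ← Complex.exp_neg]
  ring_nf

theorem sub_norm_mul_two_pi_mul_norm_le {H G : ℂ → ℂ} {r : ℝ} {z : ℂ}
    (hH : DiffContOnCl ℂ H (ball 0 r)) (hG : DiffContOnCl ℂ G (ball 0 r)) (hz : ‖z‖ < r) :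
    (r - ‖z‖) * (2 * π * ‖H z‖) ≤
      r * ∫ θ in (0 : ℝ)..(2 * π),
        ‖H (r * exp (θ * I)) - exp (-2 * θ * I) * conj (G (r * exp (θ * I)))‖ := by
  have hr : 0 < r := (norm_nonneg z).trans_lt hz
  set Φ : ℂ → ℂ := fun w => H w - (r / w) ^ 2 * conj (G w)
  have hΦ : Continuous fun θ => Φ (circleMap 0 r θ) :=
    ((hH.continuousOn_ball.mono sphere_subset_closedBall).sub
      (continuousOn_div_sq_mul_conj hr hG)).comp_continuous (continuous_circleMap 0 r)
      (circleMap_mem_sphere 0 hr.le)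
  have hΦθ : ∀ θ : ℝ, Φ (circleMap 0 r θ) =
      H (r * exp (θ * I)) - exp (-2 * θ * I) * conj (G (r * exp (θ * I))) := by
    intro θ
    simp only [Φ, circleMap_zero, ofReal_div_mul_exp_sq hr.ne']
  have hpointwise : ∀ θ, ‖deriv (circleMap 0 r) θ • ((circleMap 0 r θ - z)⁻¹ *
      Φ (circleMap 0 r θ))‖ ≤ r / (r - ‖z‖) * ‖Φ (circleMap 0 r θ)‖ := by
    intro θ
    have hdist : r - ‖z‖ ≤ ‖circleMap 0 r θ - z‖ := by
      simpa [norm_circleMap_zero, abs_of_pos hr] using norm_sub_norm_le (circleMap 0 r θ) z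
    rw [smul_eq_mul, norm_mul, norm_mul, norm_inv, deriv_circleMap, norm_mul, norm_circleMap_zero,
      abs_of_pos hr, norm_I, mul_one, div_eq_mul_inv, ← mul_assoc]
    gcongr
  have hbound : 2 * π * ‖H z‖ ≤ r / (r - ‖z‖) * ∫ θ in (0 : ℝ)..(2 * π), ‖Φ (circleMap 0 r θ)‖ :=
    calc 2 * π * ‖H z‖ = ‖∮ w in C(0, r), (w - z)⁻¹ * Φ w‖ := by
          rw [circleIntegral_sub_inv_mul_sub_div_sq_mul_conj hH hG hz]
          simp [abs_of_pos pi_pos]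
      _ ≤ ∫ θ in (0 : ℝ)..(2 * π), r / (r - ‖z‖) * ‖Φ (circleMap 0 r θ)‖ :=
          intervalIntegral.norm_integral_le_of_norm_le two_pi_pos.le
            (ae_of_all _ fun θ _ => hpointwise θ)
            ((continuous_const.mul hΦ.norm).intervalIntegrable _ _)
      _ = _ := intervalIntegral.integral_const_mul _ _
  calc (r - ‖z‖) * (2 * π * ‖H z‖)
      ≤ (r - ‖z‖) * (r / (r - ‖z‖) * ∫ θ in (0 : ℝ)..(2 * π), ‖Φ (circleMap 0 r θ)‖) := by
        gcongr
    _ = _ := by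
        rw [← mul_assoc, mul_div_cancel₀ _ (sub_pos.mpr hz).ne']
        simp only [hΦθ]

theorem sub_mul_le_of_forall_lt {a b c L : ℝ} (hab : a < b)
    (h : ∀ r, a < r → r < b → (r - a) * c ≤ L) : (b - a) * c ≤ L := by
  have hcont : Tendsto (fun r => (r - a) * c) (𝓝[<] b) (𝓝 ((b - a) * c)) :=
    ((continuous_id.sub continuous_const).mul continuous_const).continuousWithinAt
  exact le_of_tendsto hcont (eventually_of_mem (Ioo_mem_nhdsLT hab) fun r hr => h r hr.1 hr.2)

theorem add_le_sqrt_mul_of_add_le_mul_sub {x y K : ℝ} (hK : 0 ≤ K) (hx : 0 ≤ x) (hy : 0 ≤ y)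
    (h : x + y ≤ K * (x - y)) : x + y ≤ √K * x := by
  have hsq : (x + y) ^ 2 ≤ K * x ^ 2 := by
    nlinarith [mul_le_mul_of_nonneg_left h (add_nonneg hx hy), mul_nonneg hK (sq_nonneg y)]
  calc x + y ≤ √(K * x ^ 2) := Real.le_sqrt_of_sq_le hsq
    _ = √K * x := by rw [Real.sqrt_mul hK, Real.sqrt_sq hx]

theorem length_implies_bloch_general (h g : ℂ → ℂ) (K L : ℝ) (hK : 1 ≤ K)
    (hh : DifferentiableOn ℂ h (ball (0 : ℂ) 1))
    (hg : DifferentiableOn ℂ g (ball (0 : ℂ) 1))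
    (hqr : ∀ z ∈ ball (0 : ℂ) 1,
      ‖deriv h z‖ + ‖deriv g z‖ ≤
        K * (‖deriv h z‖ - ‖deriv g z‖))
    (hL : ∀ r : ℝ, 0 < r → r < 1 →
      r * ∫ θ in (0 : ℝ)..(2 * Real.pi),
          ‖deriv h ((r : ℂ) * Complex.exp (θ * Complex.I)) -
            Complex.exp (-2 * θ * Complex.I) *
              conj (deriv g ((r : ℂ) * Complex.exp (θ * Complex.I)))‖ ≤ L) :
    ∀ z ∈ ball (0 : ℂ) 1,
      ‖deriv h z‖ + ‖deriv g z‖ ≤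
          L * Real.sqrt K / (2 * Real.pi * (1 - ‖z‖)) ∧
        (1 - ‖z‖ ^ 2) *
            (‖deriv h z‖ + ‖deriv g z‖) ≤
          L * Real.sqrt K / Real.pi := by
  intro z hz
  have hz1 : ‖z‖ < 1 := mem_ball_zero_iff.mp hz
  have hdisk : ∀ {f : ℂ → ℂ}, DifferentiableOn ℂ f (ball 0 1) → ∀ r < 1,
      DiffContOnCl ℂ (deriv f) (ball 0 r) := fun hf r hr =>
    (hf.deriv isOpen_ball).diffContOnCl_ball (closedBall_subset_ball hr)
  have hX : (1 - ‖z‖) * (2 * π * ‖deriv h z‖) ≤ L :=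
    sub_mul_le_of_forall_lt hz1 fun r hzr hr1 =>
      (sub_norm_mul_two_pi_mul_norm_le (hdisk hh r hr1) (hdisk hg r hr1) hzr).trans
        (hL r ((norm_nonneg z).trans_lt hzr) hr1)
  set Λ := ‖deriv h z‖ + ‖deriv g z‖
  have hΛ : Λ ≤ √K * ‖deriv h z‖ :=
    add_le_sqrt_mul_of_add_le_mul_sub (by linarith) (norm_nonneg _) (norm_nonneg _) (hqr z hz)
  have hpos : 0 < 2 * π * (1 - ‖z‖) := by nlinarith [pi_pos]
  have hΛX : Λ * (2 * π * (1 - ‖z‖)) ≤ L * √K :=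
    calc Λ * (2 * π * (1 - ‖z‖)) ≤ √K * ‖deriv h z‖ * (2 * π * (1 - ‖z‖)) := by gcongr
      _ = √K * ((1 - ‖z‖) * (2 * π * ‖deriv h z‖)) := by ring
      _ ≤ L * √K := by rw [mul_comm L]; gcongr
  refine ⟨(le_div_iff₀ hpos).mpr hΛX, (le_div_iff₀ pi_pos).mpr ?_⟩
  have hΛ0 : 0 ≤ Λ * (2 * π * (1 - ‖z‖)) := by positivity
  calc (1 - ‖z‖ ^ 2) * Λ * π = (1 + ‖z‖) / 2 * (Λ * (2 * π * (1 - ‖z‖))) := by ring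
    _ ≤ Λ * (2 * π * (1 - ‖z‖)) := by nlinarith
    _ ≤ L * √K := hΛX

/-- A sense-preserving `K`-quasiregular harmonic mapping `f = h + conj g` with bounded
length function `l_f(1) ≤ L` satisfies `Λ_f(z) ≤ L√K/(2π(1-|z|))`; consequently `f` is a
harmonic Bloch mapping with Bloch number at most `L√K/π`. -/
theorem length_implies_bloch (h g : ℂ → ℂ) (K L : ℝ) (hK : 1 ≤ K)
    (hh : DifferentiableOn ℂ h (ball (0 : ℂ) 1))
    (hg : DifferentiableOn ℂ g (ball (0 : ℂ) 1))
    (hsp : ∀ z ∈ ball (0 : ℂ) 1, ‖deriv g z‖ < ‖deriv h z‖)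
    (hqr : ∀ z ∈ ball (0 : ℂ) 1,
      ‖deriv h z‖ + ‖deriv g z‖ ≤
        K * (‖deriv h z‖ - ‖deriv g z‖))
    (hL : ∀ r : ℝ, 0 < r → r < 1 →
      r * ∫ θ in (0 : ℝ)..(2 * Real.pi),
          ‖deriv h ((r : ℂ) * Complex.exp (θ * Complex.I)) -
            Complex.exp (-2 * θ * Complex.I) *
              conj (deriv g ((r : ℂ) * Complex.exp (θ * Complex.I)))‖ ≤ L) :
    ∀ z ∈ ball (0 : ℂ) 1,
      ‖deriv h z‖ + ‖deriv g z‖ ≤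
          L * Real.sqrt K / (2 * Real.pi * (1 - ‖z‖)) ∧
        (1 - ‖z‖ ^ 2) *
            (‖deriv h z‖ + ‖deriv g z‖) ≤
          L * Real.sqrt K / Real.pi :=
  length_implies_bloch_general h g K L hK hh hg hqr hL
end

section
/- Let f be a sense-preserving K-quasiregular harmonic mapping on the unit disk. Then Λ_f(z)² ≤ K·S_f(1)/(1 − |z|)² for all z ∈ 𝔻, where S_f(1) = sup_{0<r<1} ∫_{𝔻_r} J_f dσ. -/
/-!
Since `h'` is holomorphic, `|h'|²` is subharmonic; integrating its circle mean-value inequality in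
polar coordinates gives `π ρ² |h'(z)|² ≤ ∫_{D(z,ρ)} |h'|²`. Quasiregularity says `|g'| ≤ k |h'|` with
`k = (K - 1)/(K + 1)`, whence `Λ_f² ≤ (1 + k)² |h'|²` and `(1 - k²) |h'|² ≤ J_f`. As
`(1 + k)²/(1 - k²) = K`, this gives `π ρ² Λ_f(z)² ≤ K ∫_{D(z,ρ)} J_f ≤ K π S_f(1)` for every
`ρ < 1 - |z|`, since `D(z,ρ) ⊆ 𝔻_{|z|+ρ}`; let `ρ → 1 - |z|`.
-/

open Metric MeasureTheory Real Set

theorem ContinuousOn.integrableOn_ball {X E : Type*} [MetricSpace X] [ProperSpace X]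
    [MeasurableSpace X] [OpensMeasurableSpace X] {μ : Measure X} [IsFiniteMeasureOnCompacts μ]
    [NormedAddCommGroup E] {f : X → E} {c : X} {r : ℝ} (hf : ContinuousOn f (closedBall c r)) :
    IntegrableOn f (ball c r) μ :=
  (hf.integrableOn_compact (isCompact_closedBall c r)).mono_set ball_subset_closedBall

theorem Complex.polarCoord_symm_eq_circleMap (p : ℝ × ℝ) :
    Complex.polarCoord.symm p = circleMap 0 p.1 p.2 := by
  rw [Complex.polarCoord_symm_apply, circleMap, Complex.exp_mul_I]
  push_cast
  ring

section PolarCoordinates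

variable {E : Type*} [NormedAddCommGroup E] [NormedSpace ℝ E]

theorem setIntegral_ball_eq_setIntegral_ball_zero_add (F : ℂ → E) (c : ℂ) (ρ : ℝ) :
    ∫ w in ball c ρ, F w = ∫ w in ball 0 ρ, F (c + w) := by
  have hpre : (c + ·) ⁻¹' ball c ρ = ball 0 ρ := by
    ext w
    simp [dist_eq_norm]
  rw [← hpre, (measurePreserving_add_left volume c).setIntegral_preimage_emb
    (measurableEmbedding_addLeft c)]

theorem setIntegral_ball_zero_eq_setIntegral_polarCoord (G : ℂ → E) (ρ : ℝ) :
    ∫ w in ball 0 ρ, G w = ∫ p in Ioo 0 ρ ×ˢ Ioo (-π) π, p.1 • G (circleMap 0 p.1 p.2) := by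
  set P : ℝ × ℝ → ℂ := fun p => circleMap 0 p.1 p.2
  have hpre : polarCoord.target ∩ P ⁻¹' ball 0 ρ = Ioo 0 ρ ×ˢ Ioo (-π) π := by
    ext ⟨s, θ⟩
    simp only [P, polarCoord_target, mem_inter_iff, mem_prod, mem_Ioi, mem_preimage,
      mem_ball_zero_iff, norm_circleMap_zero, mem_Ioo]
    constructor
    · rintro ⟨⟨hs, hθ⟩, hsρ⟩
      exact ⟨⟨hs, by rwa [abs_of_pos hs] at hsρ⟩, hθ⟩
    · rintro ⟨⟨hs, hsρ⟩, hθ⟩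
      exact ⟨⟨hs, hθ⟩, by rwa [abs_of_pos hs]⟩
  have hP : Measurable P := by fun_prop
  rw [← integral_indicator measurableSet_ball, ← Complex.integral_comp_polarCoord_symm]
  simp_rw [Complex.polarCoord_symm_eq_circleMap]
  change ∫ p in _, p.1 • (ball 0 ρ).indicator G (P p) = _
  simp_rw [← indicator_comp_right, ← indicator_smul_apply]
  rw [setIntegral_indicator (measurableSet_ball.preimage hP), hpre]
  rfl

theorem integral_Ioo_neg_pi_pi_eq_circleAverage (F : ℂ → E) (c : ℂ) (s : ℝ) :
    ∫ θ in Ioo (-π) π, F (circleMap c s θ) = (2 * π) • circleAverage F c s := by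
  rw [circleAverage_eq_integral_add (-π), smul_inv_smul₀ (by positivity),
    intervalIntegral.integral_comp_add_right (fun θ => F (circleMap c s θ)),
    intervalIntegral.integral_of_le (by linarith [pi_pos]), integral_Ioc_eq_integral_Ioo]
  ring_nf

theorem setIntegral_ball_eq_integral_circleAverage {F : ℂ → E} {c : ℂ} {ρ : ℝ} (hρ : 0 ≤ ρ)
    (hF : ContinuousOn F (closedBall c ρ)) :
    ∫ w in ball c ρ, F w = ∫ s in 0..ρ, (2 * π * s) • circleAverage F c s := by
  have hcircle (p : ℝ × ℝ) : c + circleMap 0 p.1 p.2 = circleMap c p.1 p.2 := by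
    simp [circleMap]
  have hmaps : MapsTo (fun p : ℝ × ℝ => circleMap c p.1 p.2) (Icc 0 ρ ×ˢ Icc (-π) π)
      (closedBall c ρ) := fun p hp => by
    simpa [dist_eq_norm, abs_of_nonneg hp.1.1] using hp.1.2
  have hint : IntegrableOn (fun p : ℝ × ℝ => p.1 • F (circleMap c p.1 p.2))
      (Ioo 0 ρ ×ˢ Ioo (-π) π) (volume.prod volume) :=
    (ContinuousOn.integrableOn_compact (isCompact_Icc.prod isCompact_Icc)
      (continuous_fst.continuousOn.smul (hF.comp (by fun_prop) hmaps))).mono_set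
      (prod_mono Ioo_subset_Icc_self Ioo_subset_Icc_self)
  rw [setIntegral_ball_eq_setIntegral_ball_zero_add,
    setIntegral_ball_zero_eq_setIntegral_polarCoord]
  simp_rw [hcircle]
  rw [Measure.volume_eq_prod, setIntegral_prod _ hint, intervalIntegral.integral_of_le hρ,
    integral_Ioc_eq_integral_Ioo]
  refine setIntegral_congr_fun measurableSet_Ioo fun s _ => ?_
  rw [integral_smul, integral_Ioo_neg_pi_pi_eq_circleAverage, smul_smul, mul_comm]

theorem norm_circleAverage_le_circleAverage_norm (f : ℂ → E) (c : ℂ) (R : ℝ) :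
    ‖circleAverage f c R‖ ≤ circleAverage (fun z => ‖f z‖) c R := by
  rw [circleAverage_def, circleAverage_def, norm_smul, smul_eq_mul,
    Real.norm_of_nonneg (by positivity)]
  exact mul_le_mul_of_nonneg_left
    (intervalIntegral.norm_integral_le_integral_norm (by positivity)) (by positivity)

end PolarCoordinates

theorem mul_le_setIntegral_ball_of_le_circleAverage {F : ℂ → ℝ} {c : ℂ} {ρ : ℝ} (hρ : 0 ≤ ρ)
    (hF : ContinuousOn F (closedBall c ρ)) (hmean : ∀ s ∈ Ioo 0 ρ, F c ≤ circleAverage F c s) :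
    π * ρ ^ 2 * F c ≤ ∫ w in ball c ρ, F w := by
  have hcont : ContinuousOn (fun s => 2 * π * s * circleAverage F c s) (uIcc 0 ρ) := by
    rw [uIcc_of_le hρ]
    refine (continuousOn_const.mul continuousOn_id).mul
      (ContinuousOn.circleAverage (hF.mono fun z hz => ?_) fun s hs => hs.1)
    simpa [dist_eq_norm] using hz.2
  calc π * ρ ^ 2 * F c = ∫ s in 0..ρ, 2 * π * s * F c := by
        rw [intervalIntegral.integral_mul_const, intervalIntegral.integral_const_mul, integral_id]
        ring
    _ ≤ ∫ s in 0..ρ, 2 * π * s * circleAverage F c s :=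
        intervalIntegral.integral_mono_on_of_le_Ioo hρ
          ((by fun_prop : Continuous _).intervalIntegrable _ _) hcont.intervalIntegrable
          fun s hs => mul_le_mul_of_nonneg_left (hmean s hs) (by have := hs.1; positivity)
    _ = ∫ w in ball c ρ, F w := (setIntegral_ball_eq_integral_circleAverage hρ hF).symm

theorem DiffContOnCl.sq_norm_le_circleAverage {f : ℂ → ℂ} {c : ℂ} {R : ℝ}
    (hf : DiffContOnCl ℂ f (ball c |R|)) :
    ‖f c‖ ^ 2 ≤ Real.circleAverage (fun z => ‖f z‖ ^ 2) c R := by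
  have hsq : DiffContOnCl ℂ (fun z => f z ^ 2) (ball c |R|) :=
    ⟨hf.differentiableOn.pow 2, hf.continuousOn.pow 2⟩
  calc ‖f c‖ ^ 2 = ‖Real.circleAverage (fun z => f z ^ 2) c R‖ := by
        rw [hsq.circleAverage, norm_pow]
    _ ≤ Real.circleAverage (fun z => ‖f z‖ ^ 2) c R := by
        simp_rw [← norm_pow]
        exact norm_circleAverage_le_circleAverage_norm _ c R

theorem DifferentiableOn.pi_mul_sq_mul_sq_norm_le_setIntegral_ball {f : ℂ → ℂ} {c : ℂ} {ρ : ℝ}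
    (hρ : 0 ≤ ρ) (hf : DifferentiableOn ℂ f (closedBall c ρ)) :
    π * ρ ^ 2 * ‖f c‖ ^ 2 ≤ ∫ w in ball c ρ, ‖f w‖ ^ 2 :=
  mul_le_setIntegral_ball_of_le_circleAverage hρ (hf.continuousOn.norm.pow 2) fun s hs =>
    DiffContOnCl.sq_norm_le_circleAverage <| hf.diffContOnCl_ball <| by
      rw [abs_of_pos hs.1]
      exact closedBall_subset_closedBall hs.2.le

section Quasiregular

variable {K A B : ℝ}

theorem add_one_sq_mul_add_sq_le_of_add_le_mul_sub (hK : 0 ≤ K) (hA : 0 ≤ A) (hB : 0 ≤ B)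
    (h : A + B ≤ K * (A - B)) : (K + 1) ^ 2 * (A + B) ^ 2 ≤ 4 * K ^ 2 * A ^ 2 := by
  have hlin : (K + 1) * (A + B) ≤ 2 * K * A := by linarith
  calc (K + 1) ^ 2 * (A + B) ^ 2 = ((K + 1) * (A + B)) ^ 2 := by ring
    _ ≤ (2 * K * A) ^ 2 := by gcongr
    _ = 4 * K ^ 2 * A ^ 2 := by ring

theorem four_mul_sq_le_add_one_sq_mul_sub_sq_of_add_le_mul_sub (hK : 0 ≤ K) (hB : 0 ≤ B)
    (h : A + B ≤ K * (A - B)) : 4 * K * A ^ 2 ≤ (K + 1) ^ 2 * (A ^ 2 - B ^ 2) := by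
  have hlin : (K + 1) * B ≤ (K - 1) * A := by linarith
  have hsq : ((K + 1) * B) ^ 2 ≤ ((K - 1) * A) ^ 2 := by gcongr
  nlinarith

theorem sq_sub_sq_nonneg_of_add_le_mul_sub (hK : 0 ≤ K) (hB : 0 ≤ B)
    (h : A + B ≤ K * (A - B)) : 0 ≤ A ^ 2 - B ^ 2 :=
  nonneg_of_mul_nonneg_right ((by positivity : 0 ≤ 4 * K * A ^ 2).trans
    (four_mul_sq_le_add_one_sq_mul_sub_sq_of_add_le_mul_sub hK hB h)) (by positivity)

end Quasiregular

theorem pi_mul_sq_mul_add_sq_le_setIntegral_ball {φ ψ : ℂ → ℂ} {c : ℂ} {ρ K : ℝ} (hρ : 0 ≤ ρ)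
    (hK : 0 ≤ K) (hφ : DifferentiableOn ℂ φ (closedBall c ρ))
    (hψ : ContinuousOn ψ (closedBall c ρ))
    (hqr : ∀ w ∈ closedBall c ρ, ‖φ w‖ + ‖ψ w‖ ≤ K * (‖φ w‖ - ‖ψ w‖)) :
    π * ρ ^ 2 * (‖φ c‖ + ‖ψ c‖) ^ 2 ≤ K * ∫ w in ball c ρ, (‖φ w‖ ^ 2 - ‖ψ w‖ ^ 2) := by
  have hφc : ContinuousOn (fun w => ‖φ w‖ ^ 2) (closedBall c ρ) := hφ.continuousOn.norm.pow 2
  have hψc : ContinuousOn (fun w => ‖ψ w‖ ^ 2) (closedBall c ρ) := hψ.norm.pow 2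
  have harea : 4 * K * ∫ w in ball c ρ, ‖φ w‖ ^ 2 ≤
      (K + 1) ^ 2 * ∫ w in ball c ρ, (‖φ w‖ ^ 2 - ‖ψ w‖ ^ 2) := by
    rw [← integral_const_mul, ← integral_const_mul]
    exact setIntegral_mono_on (hφc.integrableOn_ball.const_mul _)
      ((hφc.sub hψc).integrableOn_ball.const_mul _) measurableSet_ball fun w hw =>
      four_mul_sq_le_add_one_sq_mul_sub_sq_of_add_le_mul_sub hK (norm_nonneg _)
        (hqr w (ball_subset_closedBall hw))
  have hcenter := add_one_sq_mul_add_sq_le_of_add_le_mul_sub hK (norm_nonneg _) (norm_nonneg _)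
    (hqr c (mem_closedBall_self hρ))
  have hmean := hφ.pi_mul_sq_mul_sq_norm_le_setIntegral_ball hρ
  refine le_of_mul_le_mul_left ?_ (by positivity : 0 < (K + 1) ^ 2)
  calc (K + 1) ^ 2 * (π * ρ ^ 2 * (‖φ c‖ + ‖ψ c‖) ^ 2)
      = π * ρ ^ 2 * ((K + 1) ^ 2 * (‖φ c‖ + ‖ψ c‖) ^ 2) := by ring
    _ ≤ π * ρ ^ 2 * (4 * K ^ 2 * ‖φ c‖ ^ 2) := by gcongr
    _ = K * (4 * K * (π * ρ ^ 2 * ‖φ c‖ ^ 2)) := by ring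
    _ ≤ K * (4 * K * ∫ w in ball c ρ, ‖φ w‖ ^ 2) := by gcongr
    _ ≤ K * ((K + 1) ^ 2 * ∫ w in ball c ρ, (‖φ w‖ ^ 2 - ‖ψ w‖ ^ 2)) := by gcongr
    _ = (K + 1) ^ 2 * (K * ∫ w in ball c ρ, (‖φ w‖ ^ 2 - ‖ψ w‖ ^ 2)) := by ring

theorem setIntegral_ball_le_setIntegral_ball_of_nonneg {F : ℂ → ℝ} {x y : ℂ} {ρ r : ℝ}
    (hdist : ρ + dist x y ≤ r) (hF : ContinuousOn F (closedBall y r))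
    (hF0 : ∀ w ∈ ball y r, 0 ≤ F w) :
    ∫ w in ball x ρ, F w ≤ ∫ w in ball y r, F w :=
  setIntegral_mono_set hF.integrableOn_ball
    ((ae_restrict_iff' measurableSet_ball).mpr (ae_of_all _ hF0))
    (ball_subset_ball' hdist).eventuallyLE

theorem mul_sq_le_of_forall_mem_Ioo_mul_sq_le {a d M : ℝ} (hd : 0 < d)
    (h : ∀ ρ ∈ Ioo 0 d, a * ρ ^ 2 ≤ M) : a * d ^ 2 ≤ M :=
  le_of_tendsto ((by fun_prop : Continuous fun ρ : ℝ => a * ρ ^ 2).continuousWithinAt (s := Iio d))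
    (Filter.eventually_of_mem (Ioo_mem_nhdsLT hd) h)

theorem lambda_sq_le_area_general (h g : ℂ → ℂ) (K S₁ : ℝ) (hK : 1 ≤ K)
    (hh : DifferentiableOn ℂ h (ball (0 : ℂ) 1))
    (hg : DifferentiableOn ℂ g (ball (0 : ℂ) 1))
    (hqr : ∀ z ∈ ball (0 : ℂ) 1,
      ‖deriv h z‖ + ‖deriv g z‖ ≤
        K * (‖deriv h z‖ - ‖deriv g z‖))
    (hS : ∀ r : ℝ, 0 < r → r < 1 →
      (Real.pi)⁻¹ *
          ∫ z in ball (0 : ℂ) r,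
            (‖deriv h z‖ ^ 2 - ‖deriv g z‖ ^ 2) ≤ S₁) :
    ∀ z ∈ ball (0 : ℂ) 1,
      (‖deriv h z‖ + ‖deriv g z‖) ^ 2 ≤
        K * S₁ / (1 - ‖z‖) ^ 2 := by
  intro z hz
  have hz1 : ‖z‖ < 1 := mem_ball_zero_iff.mp hz
  have hK0 : 0 ≤ K := by linarith
  have hh' := (hh.analyticOnNhd isOpen_ball).deriv.differentiableOn
  have hg' := (hg.analyticOnNhd isOpen_ball).deriv.differentiableOn
  rw [le_div_iff₀ (by nlinarith)]
  refine mul_sq_le_of_forall_mem_Ioo_mul_sq_le (by linarith) fun ρ ⟨hρ0, hρ⟩ => ?_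
  set r := ‖z‖ + ρ
  have hdist : ρ + dist z 0 ≤ r := by rw [dist_zero_right, add_comm]
  have hr : closedBall (0 : ℂ) r ⊆ ball 0 1 := closedBall_subset_ball (by linarith)
  have hzρ : closedBall z ρ ⊆ ball 0 1 := (closedBall_subset_closedBall' hdist).trans hr
  have hlocal := pi_mul_sq_mul_add_sq_le_setIntegral_ball hρ0.le hK0 (hh'.mono hzρ)
    (hg'.continuousOn.mono hzρ) fun w hw => hqr w (hzρ hw)
  have hmono := setIntegral_ball_le_setIntegral_ball_of_nonneg hdist
    (((hh'.continuousOn.norm.pow 2).sub (hg'.continuousOn.norm.pow 2)).mono hr) fun w hw =>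
    sq_sub_sq_nonneg_of_add_le_mul_sub hK0 (norm_nonneg _) (hqr w (hr (ball_subset_closedBall hw)))
  have hSr := (inv_mul_le_iff₀ pi_pos).mp (hS r (by positivity) (by linarith))
  refine le_of_mul_le_mul_left ?_ pi_pos
  calc π * ((‖deriv h z‖ + ‖deriv g z‖) ^ 2 * ρ ^ 2)
      = π * ρ ^ 2 * (‖deriv h z‖ + ‖deriv g z‖) ^ 2 := by ring
    _ ≤ K * (π * S₁) := hlocal.trans (mul_le_mul_of_nonneg_left (hmono.trans hSr) hK0)
    _ = π * (K * S₁) := by ring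

/-- For a sense-preserving `K`-quasiregular harmonic mapping `f = h + conj g` on the
unit disk, `Λ_f(z)² ≤ K S_f(1)/(1-|z|)²`, where `S_f(1)` bounds the harmonic area
function (normalized area measure). -/
theorem lambda_sq_le_area (h g : ℂ → ℂ) (K S₁ : ℝ) (hK : 1 ≤ K)
    (hh : DifferentiableOn ℂ h (ball (0 : ℂ) 1))
    (hg : DifferentiableOn ℂ g (ball (0 : ℂ) 1))
    (hsp : ∀ z ∈ ball (0 : ℂ) 1, ‖deriv g z‖ < ‖deriv h z‖)
    (hqr : ∀ z ∈ ball (0 : ℂ) 1,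
      ‖deriv h z‖ + ‖deriv g z‖ ≤
        K * (‖deriv h z‖ - ‖deriv g z‖))
    (hS : ∀ r : ℝ, 0 < r → r < 1 →
      (Real.pi)⁻¹ *
          ∫ z in ball (0 : ℂ) r,
            (‖deriv h z‖ ^ 2 - ‖deriv g z‖ ^ 2) ≤ S₁) :
    ∀ z ∈ ball (0 : ℂ) 1,
      (‖deriv h z‖ + ‖deriv g z‖) ^ 2 ≤
        K * S₁ / (1 - ‖z‖) ^ 2 :=
  lambda_sq_le_area_general h g K S₁ hK hh hg hqr hS
end

section
/- For any complex numbers w and z, max over θ ∈ [0, 2π] of |w·cos θ + z·sin θ| equals (|w + iz| + |w − iz|)/2. -/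
/-!
Writing `cos θ` and `sin θ` through `e^{±iθ}` gives
`w cos θ + z sin θ = A e^{iθ} + B e^{-iθ}` with `A = (w - iz)/2` and `B = (w + iz)/2`.
The triangle inequality bounds its modulus by `|A| + |B|`, and equality holds at
`θ = (arg B - arg A)/2`, where both terms point in the direction `(arg A + arg B)/2`.
Since the expression is `2π`-periodic, that value is also attained on `[0, 2π]`.
-/

open Complex

theorem mul_cos_add_mul_sin_eq (w z θ : ℂ) :
    w * cos θ + z * sin θ = (w - I * z) / 2 * exp (θ * I) + (w + I * z) / 2 * exp (-(θ * I)) := by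
  rw [← neg_mul, exp_mul_I, exp_mul_I, cos_neg, sin_neg]
  linear_combination (z * sin θ) * I_mul_I

theorem norm_mul_exp_add_mul_exp_neg_le (A B : ℂ) (θ : ℝ) :
    ‖A * exp (θ * I) + B * exp (-(θ * I))‖ ≤ ‖A‖ + ‖B‖ := by
  calc ‖A * exp (θ * I) + B * exp (-(θ * I))‖
      ≤ ‖A * exp (θ * I)‖ + ‖B * exp (-(θ * I))‖ := norm_add_le _ _
    _ = ‖A‖ + ‖B‖ := by
      rw [← neg_mul, ← ofReal_neg, norm_mul, norm_mul, norm_exp_ofReal_mul_I,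
        norm_exp_ofReal_mul_I, mul_one, mul_one]

theorem norm_mul_exp_add_mul_exp_neg_half_arg_sub (A B : ℂ) :
    let θ : ℝ := (arg B - arg A) / 2
    ‖A * exp (θ * I) + B * exp (-(θ * I))‖ = ‖A‖ + ‖B‖ := by
  intro θ
  set ψ : ℝ := (arg A + arg B) / 2
  have rotate : ∀ (C : ℂ) (α : ℝ), arg C + α = ψ → C * exp (α * I) = ‖C‖ * exp (ψ * I) := by
    intro C α h
    conv_lhs => rw [← norm_mul_exp_arg_mul_I C]
    rw [mul_assoc, ← exp_add, ← add_mul, ← ofReal_add, h]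
  have hA := rotate A θ (by simp only [θ, ψ]; ring)
  have hB := rotate B (-θ) (by simp only [θ, ψ]; ring)
  rw [ofReal_neg, neg_mul] at hB
  rw [hA, hB, ← add_mul, norm_mul, norm_exp_ofReal_mul_I, mul_one, ← ofReal_add, norm_real,
    Real.norm_of_nonneg (by positivity)]

/-- For complex numbers `w, z`, the maximum over `θ ∈ [0, 2π]` of
`|w cos θ + z sin θ|` is `(|w + iz| + |w - iz|)/2`. -/
theorem max_cos_sin_combination (w z : ℂ) :
    IsGreatest
      ((fun θ : ℝ =>
        ‖w * (Real.cos θ : ℂ) + z * (Real.sin θ : ℂ)‖) ''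
          Set.Icc 0 (2 * Real.pi))
      ((‖w + Complex.I * z‖ + ‖w - Complex.I * z‖) / 2) := by
  set A := (w - I * z) / 2
  set B := (w + I * z) / 2
  have hAB : (‖w + I * z‖ + ‖w - I * z‖) / 2 = ‖A‖ + ‖B‖ := by
    simp only [A, B, norm_div, Complex.norm_two]; ring
  have expand (θ : ℝ) : w * (Real.cos θ : ℂ) + z * (Real.sin θ : ℂ) =
      A * exp (θ * I) + B * exp (-(θ * I)) := by
    push_cast; exact mul_cos_add_mul_sin_eq w z θ
  have periodic : Function.Periodic
      (fun θ : ℝ => ‖w * (Real.cos θ : ℂ) + z * (Real.sin θ : ℂ)‖) (2 * Real.pi) := by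
    intro θ; simp only [Real.cos_periodic θ, Real.sin_periodic θ]
  rw [hAB]
  constructor
  · obtain ⟨θ, hθ, hval⟩ := periodic.exists_mem_Ico₀ Real.two_pi_pos ((arg B - arg A) / 2)
    refine ⟨θ, Set.Ico_subset_Icc_self hθ, ?_⟩
    dsimp only
    rw [← hval]
    simpa only [expand] using norm_mul_exp_add_mul_exp_neg_half_arg_sub A B
  · rintro _ ⟨θ, -, rfl⟩
    simpa only [expand] using norm_mul_exp_add_mul_exp_neg_le A B θ
end

section
/- Let f be harmonic on the unit disk and ω a majorant. If there exists C₁ > 0 with Λ_f(z) ≤ C₁·ω(1/d(z)) for all z ∈ 𝔻, where d(z) = 1 − |z|, then there exists C₂ > 0 such that |f(z) − f(w)| / |z − w| ≤ C₂·ω(1/√(d(z)d(w))) for all distinct z, w ∈ 𝔻. -/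
/-!
Integrating `f = h + conj g` along the segment from `w` to `z` gives
`|f z - f w| ≤ |z - w| ∫₀¹ Λ_f`. On the segment `d ≥ L t = (1 - t) d(w) + t d(z)`, and since
`ω x / x` is non-increasing, `ω x ≤ ω s (1 + x / s)` for `s = 1 / √(d(z) d(w))`. Finally
`∫₀¹ dt / L t` is the reciprocal of the logarithmic mean of `d(z)` and `d(w)`, which dominates
their geometric mean, so `∫₀¹ ω (1 / L t) dt ≤ 2 ω s`.
-/

open Metric Set ComplexConjugate MeasureTheory

namespace Real

theorem two_mul_log_le_sub_inv {u : ℝ} (hu : 1 ≤ u) : 2 * log u ≤ u - u⁻¹ := by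
  have h := self_le_sinh_iff.2 (log_nonneg hu)
  rw [sinh_eq, exp_log (by linarith), exp_neg, exp_log (by linarith)] at h
  linarith

theorem log_div_le_sub_div_sqrt_mul {p q : ℝ} (hp : 0 < p) (hpq : p ≤ q) :
    log (q / p) ≤ (q - p) / √(p * q) := by
  obtain ⟨x, hx, rfl⟩ : ∃ x, 0 < x ∧ x ^ 2 = p := ⟨√p, sqrt_pos.2 hp, sq_sqrt hp.le⟩
  obtain ⟨y, hy, rfl⟩ : ∃ y, 0 < y ∧ y ^ 2 = q :=
    ⟨√q, sqrt_pos.2 (hp.trans_le hpq), sq_sqrt (hp.trans_le hpq).le⟩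
  have hxy : 1 ≤ y / x :=
    (one_le_div hx).2 ((pow_le_pow_iff_left₀ hx.le hy.le two_ne_zero).1 hpq)
  have key := two_mul_log_le_sub_inv hxy
  rw [← mul_pow, sqrt_sq (by positivity), ← div_pow, log_pow]
  convert key using 1
  · push_cast; ring
  · field_simp

theorem log_div_div_sub_le_inv_sqrt_mul {p q : ℝ} (hp : 0 < p) (hq : 0 < q) :
    log (q / p) / (q - p) ≤ (√(p * q))⁻¹ := by
  wlog hpq : p ≤ q generalizing p q
  · have := this hq hp (le_of_not_ge hpq)
    rwa [mul_comm, ← neg_div_neg_eq, ← log_inv, inv_div, neg_sub] at this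
  rcases hpq.eq_or_lt with rfl | hlt
  · simp
  rw [div_le_iff₀ (sub_pos.2 hlt), inv_mul_eq_div]
  exact log_div_le_sub_div_sqrt_mul hp hpq

end Real

theorem one_sub_mul_add_mul_pos {p q t : ℝ} (hp : 0 < p) (hq : 0 < q) (ht : t ∈ Icc (0 : ℝ) 1) :
    0 < (1 - t) * p + t * q := by
  rcases ht.1.eq_or_lt with rfl | ht0
  · simpa using hp
  · nlinarith [ht.2, mul_pos ht0 hq]

theorem intervalIntegrable_inv_one_sub_mul_add_mul {p q : ℝ} (hp : 0 < p) (hq : 0 < q) :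
    IntervalIntegrable (fun t : ℝ => ((1 - t) * p + t * q)⁻¹) volume 0 1 :=
  intervalIntegral.intervalIntegrable_inv (fun t ht => (one_sub_mul_add_mul_pos hp hq
    (by rwa [uIcc_of_le zero_le_one] at ht)).ne') (by fun_prop)

theorem integral_inv_one_sub_mul_add_mul_le {p q : ℝ} (hp : 0 < p) (hq : 0 < q) :
    ∫ t in (0 : ℝ)..1, ((1 - t) * p + t * q)⁻¹ ≤ (√(p * q))⁻¹ := by
  rcases eq_or_ne q p with rfl | hne
  · simp [show ∀ t : ℝ, (1 - t) * q + t * q = q by intro; ring, Real.sqrt_mul_self hq.le]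
  have e : ∀ t : ℝ, (1 - t) * p + t * q = p + (q - p) * t := fun t => by ring
  simp_rw [e]
  rw [intervalIntegral.integral_comp_add_mul (fun x => x⁻¹) (sub_ne_zero.2 hne),
    integral_inv_of_pos (by simpa using hp) (by simpa using hq)]
  simpa [inv_mul_eq_div] using Real.log_div_div_sub_le_inv_sqrt_mul hp hq

theorem intervalIntegrable_one_add_inv_mul_sqrt {p q : ℝ} (hp : 0 < p) (hq : 0 < q) :
    IntervalIntegrable (fun t : ℝ => 1 + ((1 - t) * p + t * q)⁻¹ * √(p * q))
      volume 0 1 :=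
  intervalIntegrable_const.add ((intervalIntegrable_inv_one_sub_mul_add_mul hp hq).mul_const _)

theorem integral_one_add_inv_mul_sqrt_le_two {p q : ℝ} (hp : 0 < p) (hq : 0 < q) :
    ∫ t in (0 : ℝ)..1, (1 + ((1 - t) * p + t * q)⁻¹ * √(p * q)) ≤ 2 := by
  rw [intervalIntegral.integral_add intervalIntegrable_const
    ((intervalIntegrable_inv_one_sub_mul_add_mul hp hq).mul_const _),
    intervalIntegral.integral_mul_const]
  have hI := mul_le_mul_of_nonneg_right (integral_inv_one_sub_mul_add_mul_le hp hq)
    (Real.sqrt_nonneg (p * q))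
  rw [inv_mul_cancel₀ (Real.sqrt_pos.2 (mul_pos hp hq)).ne'] at hI
  simp only [intervalIntegral.integral_const, sub_zero, smul_eq_mul, mul_one]
  linarith

theorem le_mul_one_add_div_of_majorant {ω : ℝ → ℝ} (hmono : MonotoneOn ω (Ici 0))
    (h0 : ω 0 = 0) (hdec : ∀ s t : ℝ, 0 < s → s ≤ t → ω t / t ≤ ω s / s) {s x : ℝ}
    (hs : 0 < s) (hx : 0 ≤ x) :
    ω x ≤ ω s * (1 + x / s) := by
  have hωs : 0 ≤ ω s := h0 ▸ hmono self_mem_Ici hs.le hs.le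
  rcases le_or_gt x s with hxs | hsx
  · nlinarith [hmono hx hs.le hxs, div_nonneg hx hs.le]
  · have hx0 : 0 < x := hs.trans hsx
    calc ω x = ω x / x * x := by field_simp
      _ ≤ ω s / s * x := mul_le_mul_of_nonneg_right (hdec s x hs hsx.le) hx0.le
      _ ≤ ω s * (1 + x / s) := by rw [div_mul_eq_mul_div, mul_div_assoc]; nlinarith

theorem convex_combination_le_one_sub_norm {E : Type*} [NormedAddCommGroup E] [NormedSpace ℝ E]
    (z w : E) {t : ℝ} (ht : t ∈ Icc (0 : ℝ) 1) :
    (1 - t) * (1 - ‖w‖) + t * (1 - ‖z‖) ≤ 1 - ‖w + t • (z - w)‖ := by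
  have e : w + t • (z - w) = (1 - t) • w + t • z := by
    rw [smul_sub, sub_smul, one_smul]; abel
  have := norm_add_le ((1 - t) • w) (t • z)
  rw [norm_smul, norm_smul, Real.norm_of_nonneg (sub_nonneg.2 ht.2),
    Real.norm_of_nonneg ht.1] at this
  rw [e]
  linarith

theorem norm_sub_le_integral_of_norm_deriv_le {E : Type*} [NormedAddCommGroup E]
    [NormedSpace ℝ E] [CompleteSpace E] {φ φ' : ℝ → E} {ψ : ℝ → ℝ} {a b : ℝ} (hab : a ≤ b)
    (hderiv : ∀ t ∈ Icc a b, HasDerivAt φ (φ' t) t) (hφ' : ContinuousOn φ' (Icc a b))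
    (hψ : IntervalIntegrable ψ volume a b) (hbound : ∀ t ∈ Icc a b, ‖φ' t‖ ≤ ψ t) :
    ‖φ b - φ a‖ ≤ ∫ t in a..b, ψ t := by
  rw [← uIcc_of_le hab] at hderiv hφ'
  rw [← intervalIntegral.integral_eq_sub_of_hasDerivAt hderiv hφ'.intervalIntegrable]
  exact intervalIntegral.norm_integral_le_of_norm_le hab
    (Filter.Eventually.of_forall fun t ht => hbound t (Ioc_subset_Icc_self ht)) hψ

theorem norm_harmonic_sub_le_integral_mul_norm {h g : ℂ → ℂ} {U : Set ℂ} (hU : IsOpen U)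
    (hh : DifferentiableOn ℂ h U) (hg : DifferentiableOn ℂ g U) {z w : ℂ}
    (hseg : ∀ t ∈ Icc (0 : ℝ) 1, w + t • (z - w) ∈ U) {ψ : ℝ → ℝ}
    (hψ : IntervalIntegrable ψ volume 0 1)
    (hbound : ∀ t ∈ Icc (0 : ℝ) 1,
      ‖deriv h (w + t • (z - w))‖ + ‖deriv g (w + t • (z - w))‖ ≤ ψ t) :
    ‖(h z + conj (g z)) - (h w + conj (g w))‖ ≤ (∫ t in (0 : ℝ)..1, ψ t) * ‖z - w‖ := by
  set γ : ℝ → ℂ := fun t => w + t • (z - w)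
  have hγ : Continuous γ := by fun_prop
  have hasDerivAt_comp : ∀ F : ℂ → ℂ, DifferentiableOn ℂ F U → ∀ t ∈ Icc (0 : ℝ) 1,
      HasDerivAt (fun t => F (γ t)) (deriv F (γ t) * (z - w)) t := fun F hF t ht => by
    have hγ' : HasDerivAt γ (z - w) t := by
      simpa [γ] using ((hasDerivAt_id t).smul_const (z - w)).const_add w
    exact (hF.differentiableAt (hU.mem_nhds (hseg t ht))).hasDerivAt.comp t hγ'
  have continuousOn_comp : ∀ F : ℂ → ℂ, DifferentiableOn ℂ F U →
      ContinuousOn (fun t => deriv F (γ t) * (z - w)) (Icc (0 : ℝ) 1) := fun F hF =>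
    ((hF.deriv hU).continuousOn.comp hγ.continuousOn hseg).mul continuousOn_const
  have key := norm_sub_le_integral_of_norm_deriv_le zero_le_one
    (φ := fun t => h (γ t) + conj (g (γ t))) (ψ := fun t => ψ t * ‖z - w‖)
    (fun t ht => (hasDerivAt_comp h hh t ht).add (hasDerivAt_comp g hg t ht).star)
    ((continuousOn_comp h hh).add (continuousOn_comp g hg).star) (hψ.mul_const _)
    (fun t ht => by
      refine (norm_add_le _ _).trans ?_
      rw [norm_star, norm_mul, norm_mul, ← add_mul]
      exact mul_le_mul_of_nonneg_right (hbound t ht) (norm_nonneg _))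
  simpa [γ, intervalIntegral.integral_mul_const] using key

theorem le_majorant_mul_one_add_inv_mul_sqrt {E : Type*} [NormedAddCommGroup E]
    [NormedSpace ℝ E] {ω : ℝ → ℝ} (hmono : MonotoneOn ω (Ici 0)) (h0 : ω 0 = 0)
    (hdec : ∀ s t : ℝ, 0 < s → s ≤ t → ω t / t ≤ ω s / s) {Λ : E → ℝ} {C : ℝ} (hC : 0 ≤ C)
    (hΛ : ∀ ζ ∈ ball (0 : E) 1, Λ ζ ≤ C * ω (1 / (1 - ‖ζ‖))) {z w : E}
    (hz : z ∈ ball (0 : E) 1) (hw : w ∈ ball (0 : E) 1) {t : ℝ} (ht : t ∈ Icc (0 : ℝ) 1) :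
    Λ (w + t • (z - w)) ≤ C * ω (1 / √((1 - ‖z‖) * (1 - ‖w‖))) *
      (1 + ((1 - t) * (1 - ‖w‖) + t * (1 - ‖z‖))⁻¹ * √((1 - ‖w‖) * (1 - ‖z‖))) := by
  have ha : 0 < 1 - ‖z‖ := sub_pos.2 (mem_ball_zero_iff.1 hz)
  have hb : 0 < 1 - ‖w‖ := sub_pos.2 (mem_ball_zero_iff.1 hw)
  have hL := one_sub_mul_add_mul_pos hb ha ht
  have hd := convex_combination_le_one_sub_norm z w ht
  calc _ ≤ C * ω (1 / (1 - ‖w + t • (z - w)‖)) :=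
        hΛ _ ((convex_ball 0 1).add_smul_sub_mem hw hz ht)
    _ ≤ C * ω ((1 - t) * (1 - ‖w‖) + t * (1 - ‖z‖))⁻¹ := by
      gcongr
      exact hmono (one_div_nonneg.2 (hL.trans_le hd).le) (inv_pos.2 hL).le
        (by rw [one_div]; gcongr)
    _ ≤ C * (ω (1 / √((1 - ‖z‖) * (1 - ‖w‖))) * (1 + ((1 - t) * (1 - ‖w‖) +
        t * (1 - ‖z‖))⁻¹ / (1 / √((1 - ‖z‖) * (1 - ‖w‖))))) := by
      gcongr
      exact le_mul_one_add_div_of_majorant hmono h0 hdec (by positivity) (inv_pos.2 hL).le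
    _ = _ := by simp only [div_div_eq_mul_div, div_one, mul_comm (1 - ‖z‖)]; ring

theorem lambda_bound_implies_lipschitz_general (h g : ℂ → ℂ) (ω : ℝ → ℝ)
    (hmono : MonotoneOn ω (Ici 0))
    (h0 : ω 0 = 0)
    (hdec : ∀ s t : ℝ, 0 < s → s ≤ t → ω t / t ≤ ω s / s)
    (hh : DifferentiableOn ℂ h (ball (0 : ℂ) 1))
    (hg : DifferentiableOn ℂ g (ball (0 : ℂ) 1))
    (C₁ : ℝ) (hC₁ : 0 < C₁)
    (hΛ : ∀ z ∈ ball (0 : ℂ) 1,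
      ‖deriv h z‖ + ‖deriv g z‖ ≤
        C₁ * ω (1 / (1 - ‖z‖))) :
    ∃ C₂ > 0, ∀ z ∈ ball (0 : ℂ) 1, ∀ w ∈ ball (0 : ℂ) 1, z ≠ w →
      ‖(h z + conj (g z)) - (h w + conj (g w))‖ / ‖z - w‖ ≤
        C₂ * ω (1 / Real.sqrt ((1 - ‖z‖) * (1 - ‖w‖))) := by
  refine ⟨2 * C₁, by positivity, fun z hz w hw hzw => ?_⟩
  have ha : 0 < 1 - ‖z‖ := sub_pos.2 (mem_ball_zero_iff.1 hz)
  have hb : 0 < 1 - ‖w‖ := sub_pos.2 (mem_ball_zero_iff.1 hw)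
  set s := 1 / √((1 - ‖z‖) * (1 - ‖w‖))
  have hs : 0 < s := by positivity
  have hωs : 0 ≤ ω s := h0 ▸ hmono self_mem_Ici hs.le hs.le
  have key := norm_harmonic_sub_le_integral_mul_norm isOpen_ball hh hg
    (fun t ht => (convex_ball 0 1).add_smul_sub_mem hw hz ht)
    ((intervalIntegrable_one_add_inv_mul_sqrt hb ha).const_mul (C₁ * ω s))
    (fun t ht => le_majorant_mul_one_add_inv_mul_sqrt hmono h0 hdec hC₁.le hΛ hz hw ht)
  rw [intervalIntegral.integral_const_mul] at key
  rw [div_le_iff₀ (norm_pos_iff.2 (sub_ne_zero.2 hzw))]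
  calc _ ≤ _ := key
    _ ≤ C₁ * ω s * 2 * ‖z - w‖ := by
      gcongr
      exact integral_one_add_inv_mul_sqrt_le_two hb ha
    _ = 2 * C₁ * ω s * ‖z - w‖ := by ring

/-- If a harmonic mapping `f = h + conj g` of the unit disk satisfies
`Λ_f(z) ≤ C₁ ω(1/d(z))`, `d(z) = 1 - |z|`, for a majorant `ω`, then
`|f(z) - f(w)|/|z - w| ≤ C₂ ω(1/√(d(z)d(w)))` for some `C₂ > 0`. -/
theorem lambda_bound_implies_lipschitz (h g : ℂ → ℂ) (ω : ℝ → ℝ)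
    (hcont : ContinuousOn ω (Ici 0))
    (hmono : MonotoneOn ω (Ici 0))
    (h0 : ω 0 = 0)
    (hdec : ∀ s t : ℝ, 0 < s → s ≤ t → ω t / t ≤ ω s / s)
    (hh : DifferentiableOn ℂ h (ball (0 : ℂ) 1))
    (hg : DifferentiableOn ℂ g (ball (0 : ℂ) 1))
    (C₁ : ℝ) (hC₁ : 0 < C₁)
    (hΛ : ∀ z ∈ ball (0 : ℂ) 1,
      ‖deriv h z‖ + ‖deriv g z‖ ≤
        C₁ * ω (1 / (1 - ‖z‖))) :
    ∃ C₂ > 0, ∀ z ∈ ball (0 : ℂ) 1, ∀ w ∈ ball (0 : ℂ) 1, z ≠ w →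
      ‖(h z + conj (g z)) - (h w + conj (g w))‖ / ‖z - w‖ ≤
        C₂ * ω (1 / Real.sqrt ((1 - ‖z‖) * (1 - ‖w‖))) :=
  lambda_bound_implies_lipschitz_general h g ω hmono h0 hdec hh hg C₁ hC₁ hΛ
end

section
/- Let f be harmonic on Ω ⊂ ℂ, z ∈ Ω, r = d_Ω(z)/2, and suppose |f(ζ) − f(z)| ≤ C·ω(|ζ − z|) for all ζ ∈ Ω. Then Λ_f(z) ≤ (21C/π)·ω(d_Ω(z))/d_Ω(z), where ω is a majorant. (This is the sufficiency direction of the Hardy–Littlewood-type theorem, via Poisson kernel derivative estimates: for w ∈ 𝔻(z, r/2), |∂_w P(w, re^{iθ})| ≤ 21/(2r) and |∂_{w̄} P(w, re^{iθ})| ≤ 21/(2r), where P(w, re^{iθ}) = (r² − |w−z|²)/|w − z − re^{iθ}|².) -/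
/-!
On a circle `|ζ - c| = R` one has `(ζ - c)⁻² dζ = -R⁻² · conj dζ`, so by Cauchy's theorem
`∮ (ζ - c)⁻² conj (g ζ) dζ = -R⁻² · conj (∮ g) = 0`. Hence Cauchy's formula for `h'(c)` may be
written with the harmonic function `f - f(c)`, `f = h + conj g`, in place of `h`, and the Cauchy
estimate bounds `|h'(c)|`, and symmetrically `|g'(c)|`, by `sup_{|ζ - c| = R} |f(ζ) - f(c)| / R`.
With `R = d_Ω(z)/2` and the monotonicity of `ω` this gives `Λ_f(z) ≤ 4C ω(d_Ω(z))/d_Ω(z)`,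
and `4 ≤ 21/π`.
-/

open Metric Set ComplexConjugate Complex Real

theorem circleIntegral_one_div_sub_sq_smul_conj (g : ℂ → ℂ) (c : ℂ) (R : ℝ) :
    (∮ ζ in C(c, R), (1 / (ζ - c) ^ 2) • conj (g ζ)) =
      -((R : ℂ) ^ 2)⁻¹ • conj (∮ ζ in C(c, R), g ζ) := by
  rcases eq_or_ne R 0 with rfl | hR
  · simp only [circleIntegral.integral_radius_zero, map_zero, smul_zero]
  simp only [circleIntegral, ← intervalIntegral.intervalIntegral_conj,
    ← intervalIntegral.integral_smul]
  refine intervalIntegral.integral_congr fun θ _ => ?_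
  have hw : circleMap 0 R θ ≠ 0 := circleMap_ne_center hR
  have hconj : conj (circleMap 0 R θ) = (R : ℂ) ^ 2 / circleMap 0 R θ := by
    rw [eq_div_iff hw, mul_comm, mul_conj', norm_circleMap_zero, ← ofReal_pow, sq_abs, ofReal_pow]
  have hR' : (R : ℂ) ≠ 0 := ofReal_ne_zero.2 hR
  simp only [deriv_circleMap, circleMap_sub_center, smul_eq_mul, map_mul, conj_I, hconj]
  field_simp

theorem circleIntegrable_one_div_sub_sq_smul {f : ℂ → ℂ} {c : ℂ} {R : ℝ} (hR : 0 < R)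
    (hf : ContinuousOn f (sphere c R)) :
    CircleIntegrable (fun ζ => (1 / (ζ - c) ^ 2) • f ζ) c R := by
  refine ContinuousOn.circleIntegrable hR.le
    (ContinuousOn.smul (f := fun ζ => 1 / (ζ - c) ^ 2) ?_ hf)
  exact continuousOn_const.div (by fun_prop) fun ζ hζ =>
    pow_ne_zero 2 (sub_ne_zero.2 (ne_of_mem_sphere hζ hR.ne'))

theorem smul_deriv_eq_circleIntegral_add_conj_sub {h g : ℂ → ℂ} {c : ℂ} {R : ℝ} (hR : 0 < R)
    (hh : DifferentiableOn ℂ h (closedBall c R)) (hg : DifferentiableOn ℂ g (closedBall c R)) :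
    (2 * π * I) • deriv h c =
      ∮ ζ in C(c, R), (1 / (ζ - c) ^ 2) • (h ζ + conj (g ζ) - (h c + conj (g c))) := by
  have hsphere := sphere_subset_closedBall (x := c) (ε := R)
  have hg_zero : (∮ ζ in C(c, R), g ζ) = 0 :=
    (hg.diffContOnCl_ball subset_rfl).circleIntegral_eq_zero hR.le
  generalize h c + conj (g c) = K
  have hconst_zero : (∮ ζ in C(c, R), (1 / (ζ - c) ^ 2) • K) = 0 := by
    simp only [circleIntegral.integral_smul_const, one_div, ← zpow_natCast, ← zpow_neg]
    rw [circleIntegral.integral_sub_zpow_of_ne (by decide), zero_smul]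
  have hh_int := circleIntegrable_one_div_sub_sq_smul hR (hh.continuousOn.mono hsphere)
  have hg_int := circleIntegrable_one_div_sub_sq_smul hR
    ((continuous_conj.comp_continuousOn hg.continuousOn).mono hsphere)
  simp_rw [smul_sub, smul_add]
  rw [circleIntegral.integral_sub, circleIntegral.integral_add,
    circleIntegral_one_div_sub_sq_smul_conj, hg_zero, hconst_zero,
    hh.deriv_eq_smul_circleIntegral hR, map_zero, smul_zero, add_zero, sub_zero]
  exacts [hh_int, hg_int, hh_int.add hg_int,
    circleIntegrable_one_div_sub_sq_smul hR continuousOn_const]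

theorem norm_deriv_le_of_norm_add_conj_sub_le {h g : ℂ → ℂ} {c : ℂ} {R M : ℝ} (hR : 0 < R)
    (hh : DifferentiableOn ℂ h (closedBall c R)) (hg : DifferentiableOn ℂ g (closedBall c R))
    (hM : ∀ ζ ∈ sphere c R, ‖h ζ + conj (g ζ) - (h c + conj (g c))‖ ≤ M) :
    ‖deriv h c‖ ≤ M / R := by
  have hbound : ∀ ζ ∈ sphere c R,
      ‖(1 / (ζ - c) ^ 2) • (h ζ + conj (g ζ) - (h c + conj (g c)))‖ ≤ M / R ^ 2 := by
    intro ζ hζ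
    rw [norm_smul, norm_div, norm_one, norm_pow, mem_sphere_iff_norm.1 hζ, one_div_mul_eq_div]
    gcongr
    exact hM ζ hζ
  calc ‖deriv h c‖
      = ‖(2 * π * I)⁻¹ • ∮ ζ in C(c, R),
          (1 / (ζ - c) ^ 2) • (h ζ + conj (g ζ) - (h c + conj (g c)))‖ := by
        rw [← smul_deriv_eq_circleIntegral_add_conj_sub hR hh hg, inv_smul_smul₀ two_pi_I_ne_zero]
    _ ≤ R * (M / R ^ 2) :=
        circleIntegral.norm_two_pi_i_inv_smul_integral_le_of_norm_le_const hR.le hbound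
    _ = M / R := by field_simp

theorem norm_deriv_add_norm_deriv_le {h g : ℂ → ℂ} {c : ℂ} {R M : ℝ} (hR : 0 < R)
    (hh : DifferentiableOn ℂ h (closedBall c R)) (hg : DifferentiableOn ℂ g (closedBall c R))
    (hM : ∀ ζ ∈ sphere c R, ‖h ζ + conj (g ζ) - (h c + conj (g c))‖ ≤ M) :
    ‖deriv h c‖ + ‖deriv g c‖ ≤ 2 * M / R := by
  have hM' : ∀ ζ ∈ sphere c R, ‖g ζ + conj (h ζ) - (g c + conj (h c))‖ ≤ M := fun ζ hζ => by
    rw [← norm_conj]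
    simpa only [map_sub, map_add, conj_conj, add_comm] using hM ζ hζ
  have := norm_deriv_le_of_norm_add_conj_sub_le hR hh hg hM
  have := norm_deriv_le_of_norm_add_conj_sub_le hR hg hh hM'
  rw [two_mul, add_div]
  gcongr

theorem poisson_gradient_estimate_general (Ω : Set ℂ)
    (hΩopen : IsOpen Ω) (hΩproper : Ωᶜ.Nonempty)
    (h g : ℂ → ℂ)
    (hh : DifferentiableOn ℂ h Ω) (hg : DifferentiableOn ℂ g Ω)
    (ω : ℝ → ℝ)
    (hmono : MonotoneOn ω (Ici 0))
    (h0 : ω 0 = 0)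
    (C : ℝ) (hC : 0 < C)
    (z : ℂ) (hz : z ∈ Ω)
    (hlip : ∀ ζ ∈ Ω,
      ‖(h ζ + conj (g ζ)) - (h z + conj (g z))‖ ≤
        C * ω (‖ζ - z‖)) :
    ‖deriv h z‖ + ‖deriv g z‖ ≤
      (21 * C / Real.pi) * (ω (infDist z Ωᶜ) / infDist z Ωᶜ) := by
  set d := infDist z Ωᶜ
  have hd : 0 < d := (hΩopen.isClosed_compl.notMem_iff_infDist_pos hΩproper).1 (not_not.2 hz)
  have hball : closedBall z (d / 2) ⊆ Ω :=
    (closedBall_subset_ball (half_lt_self hd)).trans ball_infDist_compl_subset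
  have hsphere : ∀ ζ ∈ sphere z (d / 2),
      ‖h ζ + conj (g ζ) - (h z + conj (g z))‖ ≤ C * ω d := fun ζ hζ => by
    refine (hlip ζ (hball (sphere_subset_closedBall hζ))).trans ?_
    rw [mem_sphere_iff_norm.1 hζ]
    gcongr
    exact hmono (half_pos hd).le hd.le (half_le_self hd.le)
  have hωd : 0 ≤ ω d / d := div_nonneg (h0 ▸ hmono self_mem_Ici hd.le hd.le) hd.le
  calc ‖deriv h z‖ + ‖deriv g z‖
      ≤ 2 * (C * ω d) / (d / 2) :=
        norm_deriv_add_norm_deriv_le (half_pos hd) (hh.mono hball) (hg.mono hball) hsphere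
    _ = 4 * C * (ω d / d) := by field_simp; ring
    _ ≤ (21 * C / π) * (ω d / d) := by
        gcongr
        rw [le_div_iff₀ pi_pos]
        nlinarith [pi_le_four]

/-- Hardy--Littlewood type theorem (sufficiency direction): if the harmonic mapping
`f = h + conj g` on `Ω` satisfies `|f(ζ) - f(z)| ≤ C ω(|ζ - z|)` for a majorant `ω`,
then `Λ_f(z) ≤ (21C/π) ω(d_Ω(z))/d_Ω(z)`. -/
theorem poisson_gradient_estimate (Ω : Set ℂ)
    (hΩopen : IsOpen Ω) (hΩproper : Ωᶜ.Nonempty)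
    (h g : ℂ → ℂ)
    (hh : DifferentiableOn ℂ h Ω) (hg : DifferentiableOn ℂ g Ω)
    (ω : ℝ → ℝ)
    (hcont : ContinuousOn ω (Ici 0))
    (hmono : MonotoneOn ω (Ici 0))
    (h0 : ω 0 = 0)
    (hdec : ∀ s t : ℝ, 0 < s → s ≤ t → ω t / t ≤ ω s / s)
    (C : ℝ) (hC : 0 < C)
    (z : ℂ) (hz : z ∈ Ω)
    (hlip : ∀ ζ ∈ Ω,
      ‖(h ζ + conj (g ζ)) - (h z + conj (g z))‖ ≤
        C * ω (‖ζ - z‖)) :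
    ‖deriv h z‖ + ‖deriv g z‖ ≤
      (21 * C / Real.pi) * (ω (infDist z Ωᶜ) / infDist z Ωᶜ) :=
  poisson_gradient_estimate_general Ω hΩopen hΩproper h g hh hg ω hmono h0 C hC z hz hlip
end

section
/- For the Poisson kernel P(w, re^{iθ}) = (r² − |w − z|²)/|w − z − re^{iθ}|² of the disk 𝔻(z, r), and for all w with |w − z| ≤ r/2, the partial derivatives satisfy |∂P/∂w| ≤ 21/(2r) and |∂P/∂w̄| ≤ 21/(2r). -/
open ComplexConjugate

/-!
With `a = w - z` and `v = a - r e^{iθ}` we have `‖v‖ ≥ r - ‖a‖ ≥ r/2`, so the triangle inequality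
bounds either derivative by `‖a‖/‖v‖² + (r² - ‖a‖²)/‖v‖³ ≤ 2/r + 8/r`. The `∂/∂w` expression is
the `∂/∂w̄` one with `a` and `v` replaced by their conjugates, which have the same norms.
-/

lemma poisson_wirtinger_real_bound {r s D : ℝ} (hr : 0 < r) (hsr : s ≤ r / 2)
    (hD : r / 2 ≤ D) :
    (s * D ^ 2 + (r ^ 2 - s ^ 2) * D) / D ^ 4 ≤ 21 / (2 * r) := by
  calc (s * D ^ 2 + (r ^ 2 - s ^ 2) * D) / D ^ 4 = s / D ^ 2 + (r ^ 2 - s ^ 2) / D ^ 3 := by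
        field_simp
    _ ≤ (r / 2) / (r / 2) ^ 2 + r ^ 2 / (r / 2) ^ 3 := by
        gcongr
        nlinarith
    _ = 10 / r := by field_simp; norm_num
    _ ≤ 21 / (2 * r) := by rw [div_le_div_iff₀ hr (by positivity)]; nlinarith

lemma norm_poisson_wirtinger_le {a v : ℂ} {r : ℝ} (hr : 0 < r) (ha : ‖a‖ ≤ r / 2)
    (hv : r / 2 ≤ ‖v‖) :
    ‖(-a * (‖v‖ : ℂ) ^ 2 - ((r : ℂ) ^ 2 - (‖a‖ : ℂ) ^ 2) * v) / (‖v‖ : ℂ) ^ 4‖ ≤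
      21 / (2 * r) := by
  have hsr : ‖a‖ ^ 2 ≤ r ^ 2 := by nlinarith [norm_nonneg a]
  have hnum : ‖-a * (‖v‖ : ℂ) ^ 2 - ((r : ℂ) ^ 2 - (‖a‖ : ℂ) ^ 2) * v‖ ≤
      ‖a‖ * ‖v‖ ^ 2 + (r ^ 2 - ‖a‖ ^ 2) * ‖v‖ := by
    have hcoeff : (r : ℂ) ^ 2 - (‖a‖ : ℂ) ^ 2 = ((r ^ 2 - ‖a‖ ^ 2 : ℝ) : ℂ) := by push_cast; rfl
    refine (norm_sub_le _ _).trans_eq ?_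
    rw [hcoeff, norm_mul, norm_mul, norm_neg, norm_pow, Complex.norm_real, Complex.norm_real,
      norm_norm, Real.norm_of_nonneg (by linarith)]
  rw [norm_div, norm_pow, Complex.norm_real, norm_norm]
  calc _ ≤ (‖a‖ * ‖v‖ ^ 2 + (r ^ 2 - ‖a‖ ^ 2) * ‖v‖) / ‖v‖ ^ 4 := by gcongr
    _ ≤ 21 / (2 * r) := poisson_wirtinger_real_bound hr ha hv

/-- Estimates for the Wirtinger derivatives of the Poisson kernel
`P(w, re^{iθ}) = (r² - |w-z|²)/|w-z-re^{iθ}|²` of the disk `𝔻(z,r)`: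
for `|w - z| ≤ r/2`, both `|∂P/∂w|` and `|∂P/∂w̄|` are at most `21/(2r)`. -/
theorem poisson_kernel_derivative_bound (z w : ℂ) (r θ : ℝ)
    (hr : 0 < r) (hw : ‖w - z‖ ≤ r / 2) :
    ‖
        (-(conj (w - z)) *
            (((‖w - z - (r : ℂ) * Complex.exp (θ * Complex.I)‖ : ℝ) : ℂ)) ^ 2 -
          ((r : ℂ) ^ 2 - (((‖w - z‖ : ℝ) : ℂ)) ^ 2) *
            (conj (w - z) - (r : ℂ) * Complex.exp (-θ * Complex.I))) /
          (((‖w - z - (r : ℂ) * Complex.exp (θ * Complex.I)‖ : ℝ) : ℂ)) ^ 4‖ ≤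
        21 / (2 * r) ∧
      ‖
        (-(w - z) *
            (((‖w - z - (r : ℂ) * Complex.exp (θ * Complex.I)‖ : ℝ) : ℂ)) ^ 2 -
          ((r : ℂ) ^ 2 - (((‖w - z‖ : ℝ) : ℂ)) ^ 2) *
            (w - z - (r : ℂ) * Complex.exp (θ * Complex.I))) /
          (((‖w - z - (r : ℂ) * Complex.exp (θ * Complex.I)‖ : ℝ) : ℂ)) ^ 4‖ ≤
        21 / (2 * r) := by
  set e : ℂ := (r : ℂ) * Complex.exp (θ * Complex.I)
  have he : ‖e‖ = r := by
    rw [norm_mul, Complex.norm_real, Complex.norm_exp_ofReal_mul_I, Real.norm_of_nonneg hr.le,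
      mul_one]
  have hdist : r / 2 ≤ ‖w - z - e‖ := by
    linarith [norm_sub_norm_le e (w - z), norm_sub_rev e (w - z)]
  have hconj : conj (w - z) - (r : ℂ) * Complex.exp (-θ * Complex.I) = conj (w - z - e) := by
    simp [e, ← Complex.exp_conj]
  refine ⟨?_, norm_poisson_wirtinger_le hr hw hdist⟩
  have h := norm_poisson_wirtinger_le hr (a := conj (w - z)) (v := conj (w - z - e))
    (by rwa [Complex.norm_conj]) (by rwa [Complex.norm_conj])
  rwa [Complex.norm_conj, Complex.norm_conj, ← hconj] at h
end
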